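/- arXiv:2004.01835 — 13 statements merged into one kernel-verified Lean document; each statement's English description precedes it below -/
import Mathlib

section
/- Let E be a vector subspace of ℝ^X containing the constant function 1. If E is closed under truncation (f ∈ E implies f ∧ 1 ∈ E pointwise), then E is a vector sublattice of ℝ^X, i.e., closed under pointwise absolute value. -/
theorem stmt_0 {X : Type*} [Nonempty X] (E : Set (X → ℝ))
    (hadd : ∀ f ∈ E, ∀ g ∈ E, f + g ∈ E)
    (hsmul : ∀ (c : ℝ), ∀ f ∈ E, c • f ∈ E)
    (hone : (1 : X → ℝ) ∈ E)
    (hstone : ∀ f ∈ E, f ⊓ 1 ∈ E) :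
    ∀ f ∈ E, |f| ∈ E := by
  have h0 : ∀ f ∈ E, f ⊓ 0 ∈ E := by
    intro f hf
    have h : (f + 1) ⊓ 1 + (-1 : ℝ) • 1 ∈ E :=
      hadd _ (hstone _ (hadd f hf 1 hone)) _ (hsmul _ _ hone)
    have heq : (f + 1) ⊓ 1 + (-1 : ℝ) • 1 = f ⊓ 0 := by
      funext x
      simp only [Pi.add_apply, Pi.inf_apply, Pi.smul_apply, Pi.one_apply, Pi.zero_apply,
        smul_eq_mul]
      rcases le_total (f x) 0 with hx | hx
      · rw [min_eq_left (by linarith), min_eq_left hx]; ring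
      · rw [min_eq_right (by linarith), min_eq_right hx]; ring
    rwa [heq] at h
  intro f hf
  have h1 : f ⊓ 0 ∈ E := h0 f hf
  have h2 : ((-1 : ℝ) • f) ⊓ 0 ∈ E := h0 _ (hsmul _ _ hf)
  have h3 : (-1 : ℝ) • (f ⊓ 0 + ((-1 : ℝ) • f) ⊓ 0) ∈ E := hsmul _ _ (hadd _ h1 _ h2)
  have heq : (-1 : ℝ) • (f ⊓ 0 + ((-1 : ℝ) • f) ⊓ 0) = |f| := by
    funext x
    simp only [Pi.smul_apply, Pi.add_apply, Pi.inf_apply, Pi.abs_apply, Pi.zero_apply,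
      smul_eq_mul]
    rcases le_total (f x) 0 with hx | hx
    · rw [min_eq_left hx, min_eq_right (by linarith), abs_of_nonpos hx]; ring
    · rw [min_eq_right hx, min_eq_left (by linarith), abs_of_nonneg hx]; ring
  rwa [heq] at h3
end

section
/- Let E = {τf : f ∈ C(ℝ)} where (τf)(x) = x·f(x). Then E is a vector subspace of ℝ^ℝ possessing the Stone property (for every g ∈ E, g ∧ 1 ∈ E), but E is not a vector sublattice of ℝ^ℝ: the identity function e(x) = x belongs to E while |e| does not. -/
theorem stmt_2 (E : Set (ℝ → ℝ))
    (hE : E = {g | ∃ f : ℝ → ℝ, Continuous f ∧ g = fun x => x * f x}) :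
    (∀ g ∈ E, ∀ h ∈ E, g + h ∈ E) ∧
    (∀ (c : ℝ), ∀ g ∈ E, c • g ∈ E) ∧
    (∀ g ∈ E, g ⊓ 1 ∈ E) ∧
    ((fun x : ℝ => x) ∈ E) ∧
    (|fun x : ℝ => x| ∉ E) := by
  subst hE
  refine ⟨?_, ?_, ?_, ?_, ?_⟩
  · rintro g ⟨f, hf, rfl⟩ h ⟨f', hf', rfl⟩
    exact ⟨f + f', hf.add hf', by funext x; simp [mul_add]⟩
  · rintro c g ⟨f, hf, rfl⟩
    refine ⟨fun x => c * f x, continuous_const.mul hf, ?_⟩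
    funext x; simp; ring
  · rintro g ⟨f, hf, rfl⟩
    set F : ℝ → ℝ := fun x => if x = 0 then f 0 else min (x * f x) 1 / x with hFdef
    have heq : F =ᶠ[nhds (0 : ℝ)] f := by
      have h1 : Filter.Tendsto (fun x : ℝ => x * f x) (nhds 0) (nhds 0) := by
        have : Filter.Tendsto (fun x : ℝ => x * f x) (nhds 0) (nhds (0 * f 0)) := (continuous_id.mul hf).tendsto 0
        simpa only [zero_mul] using this
      have h2 : ∀ᶠ x in nhds (0 : ℝ), x * f x < 1 := h1.eventually_lt_const one_pos
      filter_upwards [h2] with x hx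
      rcases eq_or_ne x 0 with rfl | hx0
      · simp [hFdef]
      · simp only [hFdef, if_neg hx0, min_eq_left hx.le]
        field_simp
    have hFc : Continuous F := by
      rw [continuous_iff_continuousAt]
      intro x
      rcases eq_or_ne x 0 with rfl | hx
      · exact hf.continuousAt.congr heq.symm
      · have hc : ContinuousAt (fun x : ℝ => min (x * f x) 1 / x) x :=
          (((continuous_id.mul hf).min continuous_const).continuousAt).div continuousAt_id hx
        apply hc.congr
        filter_upwards [isOpen_ne.mem_nhds hx] with y hy
        simp [hFdef, hy]
    refine ⟨F, hFc, ?_⟩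
    funext x
    simp only [Pi.inf_apply, Pi.one_apply]
    rcases eq_or_ne x 0 with rfl | hx0
    · simp [hFdef]
    · simp only [hFdef, if_neg hx0]
      rw [mul_div_cancel₀ _ hx0]
  · exact ⟨fun _ => 1, continuous_const, by funext x; simp⟩
  · rintro ⟨f, hf, hfe⟩
    have hx : ∀ x : ℝ, |x| = x * f x := fun x => congrFun hfe x
    have hpos : ∀ x : ℝ, 0 < x → f x = 1 := by
      intro x hx0
      have := hx x
      rw [abs_of_pos hx0] at this
      have := mul_left_cancel₀ hx0.ne' (by linarith : x * f x = x * 1)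
      linarith
    have hneg : ∀ x : ℝ, x < 0 → f x = -1 := by
      intro x hx0
      have := hx x
      rw [abs_of_neg hx0] at this
      have : f x * x = -x := by linarith [this]
      have := mul_right_cancel₀ hx0.ne (by linarith [this] : f x * x = (-1) * x)
      exact this
    have h1 : Filter.Tendsto f (nhdsWithin 0 (Set.Ioi 0)) (nhds (f 0)) :=
      (hf.tendsto 0).mono_left nhdsWithin_le_nhds
    have h2 : Filter.Tendsto f (nhdsWithin 0 (Set.Ioi 0)) (nhds 1) := by
      apply Filter.Tendsto.congr' _ tendsto_const_nhds
      filter_upwards [self_mem_nhdsWithin] with x hx0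
      exact (hpos x hx0).symm
    have e1 : f 0 = 1 := tendsto_nhds_unique h1 h2
    have h1' : Filter.Tendsto f (nhdsWithin 0 (Set.Iio 0)) (nhds (f 0)) :=
      (hf.tendsto 0).mono_left nhdsWithin_le_nhds
    have h2' : Filter.Tendsto f (nhdsWithin 0 (Set.Iio 0)) (nhds (-1)) := by
      apply Filter.Tendsto.congr' _ tendsto_const_nhds
      filter_upwards [self_mem_nhdsWithin] with x hx0
      exact (hneg x hx0).symm
    have e2 : f 0 = -1 := tendsto_nhds_unique h1' h2'
    rw [e1] at e2
    norm_num at e2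
end

section
/- Every truncation homomorphism ψ on a truncated vector sublattice L of ℝ^X is positive: if f ∈ L and f ≤ 0 pointwise, then ψ(f) ≤ 0. -/
theorem stmt_3 {X : Type*} [Nonempty X] (L : Set (X → ℝ))
    (hL_add : ∀ f ∈ L, ∀ g ∈ L, f + g ∈ L)
    (hL_smul : ∀ (c : ℝ), ∀ f ∈ L, c • f ∈ L)
    (hL_sup : ∀ f ∈ L, ∀ g ∈ L, f ⊔ g ∈ L)
    (hL_inf : ∀ f ∈ L, ∀ g ∈ L, f ⊓ g ∈ L)
    (hL_trunc : ∀ f ∈ L, f ⊓ 1 ∈ L)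
    (ψ : (X → ℝ) → ℝ)
    (hψ_add : ∀ f ∈ L, ∀ g ∈ L, ψ (f + g) = ψ f + ψ g)
    (hψ_smul : ∀ (c : ℝ), ∀ f ∈ L, ψ (c • f) = c * ψ f)
    (hψ_ne : ∃ f ∈ L, ψ f ≠ 0)
    (hψ_trunc : ∀ f ∈ L, ψ (f ⊓ 1) = min (ψ f) 1) :
    ∀ f ∈ L, f ≤ 0 → ψ f ≤ 0 := by
  intro f hf hle
  by_contra h
  push_neg at h
  set c : ℝ := 2 / ψ f with hc
  have hcf : c • f ∈ L := hL_smul c f hf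
  have hcf_le : c • f ≤ (0 : X → ℝ) := by
    intro x
    have := hle x
    simp only [Pi.smul_apply, Pi.zero_apply, smul_eq_mul] at this ⊢
    exact mul_nonpos_of_nonneg_of_nonpos (by positivity) this
  have htr : (c • f) ⊓ 1 = c • f :=
    inf_eq_left.mpr (le_trans hcf_le (fun x => zero_le_one))
  have h1 : ψ (c • f) = min (ψ (c • f)) 1 := by
    rw [← hψ_trunc _ hcf, htr]
  have h2 : ψ (c • f) = 2 := by
    rw [hψ_smul c f hf, hc, div_mul_cancel₀]
    exact ne_of_gt h
  rw [h2] at h1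
  norm_num at h1
end

section
/- Every truncation homomorphism ψ on a truncated vector sublattice L of ℝ^X is a lattice homomorphism: ψ(f⁺) = ψ(f)⁺ for all f ∈ L (equivalently, ψ(|f|) = |ψ(f)|). -/
private lemma aux_min_scale (c a : ℝ) (hc : 0 < c) :
    c * min (c⁻¹ * a) 1 = min a c := by
  rcases le_total a c with h | h
  · have h1 : c⁻¹ * a ≤ 1 := by
      rw [inv_mul_eq_div, div_le_one hc]; exact h
    rw [min_eq_left h1, min_eq_left h]
    field_simp
  · have h1 : (1:ℝ) ≤ c⁻¹ * a := by
      rw [inv_mul_eq_div, le_div_iff₀ hc]; linarith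
    rw [min_eq_right h1, min_eq_right h, mul_one]

theorem stmt_4 {X : Type*} [Nonempty X] (L : Set (X → ℝ))
    (hL_add : ∀ f ∈ L, ∀ g ∈ L, f + g ∈ L)
    (hL_smul : ∀ (c : ℝ), ∀ f ∈ L, c • f ∈ L)
    (hL_sup : ∀ f ∈ L, ∀ g ∈ L, f ⊔ g ∈ L)
    (hL_inf : ∀ f ∈ L, ∀ g ∈ L, f ⊓ g ∈ L)
    (hL_trunc : ∀ f ∈ L, f ⊓ 1 ∈ L)
    (ψ : (X → ℝ) → ℝ)
    (hψ_add : ∀ f ∈ L, ∀ g ∈ L, ψ (f + g) = ψ f + ψ g)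
    (hψ_smul : ∀ (c : ℝ), ∀ f ∈ L, ψ (c • f) = c * ψ f)
    (hψ_ne : ∃ f ∈ L, ψ f ≠ 0)
    (hψ_trunc : ∀ f ∈ L, ψ (f ⊓ 1) = min (ψ f) 1) :
    (∀ f ∈ L, ψ (f ⊔ 0) = max (ψ f) 0) ∧ (∀ f ∈ L, ψ |f| = |ψ f|) := by
  classical
  obtain ⟨f0, hf0, _⟩ := hψ_ne
  have h0L : (0 : X → ℝ) ∈ L := by
    have := hL_smul 0 f0 hf0; simpa using this
  have hL_neg : ∀ f ∈ L, -f ∈ L := by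
    intro f hf; have := hL_smul (-1) f hf; simpa using this
  have hψ_neg : ∀ f ∈ L, ψ (-f) = -ψ f := by
    intro f hf; have := hψ_smul (-1) f hf; simpa using this
  have hL_sub : ∀ f ∈ L, ∀ g ∈ L, f - g ∈ L := by
    intro f hf g hg
    have := hL_add f hf (-g) (hL_neg g hg)
    simpa [sub_eq_add_neg] using this
  have hψ_sub : ∀ f ∈ L, ∀ g ∈ L, ψ (f - g) = ψ f - ψ g := by
    intro f hf g hg
    have h1 := hψ_add f hf (-g) (hL_neg g hg)
    rw [sub_eq_add_neg, h1, hψ_neg g hg, sub_eq_add_neg]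
  -- positivity of ψ
  have hpos : ∀ f ∈ L, f ≤ 0 → ψ f ≤ 0 := by
    intro g hgL hgle
    by_contra h
    push_neg at h
    set t : ℝ := 2 / ψ g with ht
    have htpos : 0 < t := by positivity
    have h1 : (t • g) ⊓ 1 = t • g := by
      funext x
      have hx : t * g x ≤ 0 :=
        mul_nonpos_of_nonneg_of_nonpos htpos.le (hgle x)
      have : min (t * g x) 1 = t * g x := min_eq_left (hx.trans zero_le_one)
      simpa [Pi.inf_apply] using this
    have h2 := hψ_trunc (t • g) (hL_smul t g hgL)
    rw [h1, hψ_smul t g hgL] at h2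
    have h3 : t * ψ g ≤ 1 := h2 ▸ min_le_right _ _
    have h4 : t * ψ g = 2 := by
      rw [ht]; field_simp
    linarith
  have hmono : ∀ f ∈ L, ∀ g ∈ L, f ≤ g → ψ f ≤ ψ g := by
    intro f hf g hg hle
    have h1 : f - g ≤ 0 := by
      intro x; simp [Pi.sub_apply, sub_nonpos]; exact hle x
    have := hpos (f - g) (hL_sub f hf g hg) h1
    rw [hψ_sub f hf g hg] at this
    linarith
  -- truncation at level c > 0
  have keyB : ∀ f ∈ L, ∀ c : ℝ, 0 < c →
      (f ⊓ (fun _ => c)) ∈ L ∧ ψ (f ⊓ (fun _ => c)) = min (ψ f) c := by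
    intro f hf c hc
    have h1 : (c⁻¹ • f) ⊓ 1 ∈ L := hL_trunc _ (hL_smul c⁻¹ f hf)
    have h2 : c • ((c⁻¹ • f) ⊓ 1) = f ⊓ (fun _ => c) := by
      funext x
      have := aux_min_scale c (f x) hc
      simpa [Pi.smul_apply, Pi.inf_apply, Pi.one_apply, smul_eq_mul] using this
    have h3 : ψ (c • ((c⁻¹ • f) ⊓ 1)) = min (ψ f) c := by
      rw [hψ_smul c _ h1, hψ_trunc _ (hL_smul c⁻¹ f hf),
        hψ_smul c⁻¹ f hf, aux_min_scale c (ψ f) hc]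
    constructor
    · rw [← h2]; exact hL_smul c _ h1
    · rw [← h2]; exact h3
  -- ψ (f ⊓ 0) = min (ψ f) 0
  have keyInf0 : ∀ f ∈ L, ψ (f ⊓ 0) = min (ψ f) 0 := by
    intro f hf
    have hmL : f ⊓ 0 ∈ L := hL_inf f hf 0 h0L
    have hub1 : ψ (f ⊓ 0) ≤ ψ f :=
      hmono _ hmL f hf (fun x => by simp [Pi.inf_apply])
    have hub2 : ψ (f ⊓ 0) ≤ 0 := by
      have : ∀ c : ℝ, 0 < c → ψ (f ⊓ 0) ≤ 0 + c := by
        intro c hc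
        obtain ⟨hcL, hcψ⟩ := keyB f hf c hc
        have hle : f ⊓ 0 ≤ f ⊓ (fun _ => c) := by
          intro x
          simp only [Pi.inf_apply, Pi.zero_apply]
          exact min_le_min le_rfl hc.le
        have := hmono _ hmL _ hcL hle
        rw [hcψ] at this
        have := this.trans (min_le_right _ _)
        linarith
      exact le_of_forall_pos_le_add this
    have hlb : min (ψ f) 0 ≤ ψ (f ⊓ 0) := by
      have : ∀ c : ℝ, 0 < c → min (ψ f) 0 ≤ ψ (f ⊓ 0) + c := by
        intro c hc
        obtain ⟨hcL, hcψ⟩ := keyB f hf c hc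
        set h := (f ⊓ (fun _ => c)) - (f ⊓ 0) with hh
        have hhL : h ∈ L := hL_sub _ hcL _ hmL
        have hhle : h ≤ (fun _ => c) := by
          intro x
          simp only [hh, Pi.sub_apply, Pi.inf_apply, Pi.zero_apply]
          rcases le_total (f x) 0 with hx | hx
          · rw [min_eq_left hx]
            rcases le_total (f x) c with hy | hy
            · rw [min_eq_left hy]; linarith
            · rw [min_eq_right hy]; linarith
          · rw [min_eq_right hx]
            rcases le_total (f x) c with hy | hy
            · rw [min_eq_left hy]; linarith
            · rw [min_eq_right hy]; linarith
        -- h ⊓ const c = h, so ψ h ≤ c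
        have heq : h ⊓ (fun _ => c) = h := by
          funext x
          exact min_eq_left (hhle x)
        obtain ⟨_, hψh⟩ := keyB h hhL c hc
        rw [heq] at hψh
        have hψhle : ψ h ≤ c := hψh ▸ min_le_right _ _
        rw [hh, hψ_sub _ hcL _ hmL, hcψ] at hψhle
        have : min (ψ f) 0 ≤ min (ψ f) c := min_le_min le_rfl hc.le
        linarith
      have := le_of_forall_pos_le_add (a := min (ψ f) 0 - ψ (f ⊓ 0)) (b := 0)
        (fun c hc => by have := this c hc; linarith)
      linarith
    exact le_antisymm (le_min hub1 hub2) hlb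
  have hsup : ∀ f ∈ L, ψ (f ⊔ 0) = max (ψ f) 0 := by
    intro f hf
    have hmL : f ⊓ 0 ∈ L := hL_inf f hf 0 h0L
    have heq : f ⊔ 0 = f - (f ⊓ 0) := by
      funext x
      simp only [Pi.sup_apply, Pi.sub_apply, Pi.inf_apply, Pi.zero_apply]
      rcases le_total (f x) 0 with hx | hx
      · rw [max_eq_right hx, min_eq_left hx]; ring
      · rw [max_eq_left hx, min_eq_right hx]; ring
    rw [heq, hψ_sub f hf _ hmL, keyInf0 f hf]
    rcases le_total (ψ f) 0 with hx | hx
    · rw [max_eq_right hx, min_eq_left hx]; ring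
    · rw [max_eq_left hx, min_eq_right hx]; ring
  refine ⟨hsup, ?_⟩
  intro f hf
  have hnegL := hL_neg f hf
  have habs : |f| = (f ⊔ 0) + ((-f) ⊔ 0) := by
    funext x
    simp only [Pi.abs_apply, Pi.add_apply, Pi.sup_apply, Pi.neg_apply,
      Pi.zero_apply]
    rcases le_total (f x) 0 with hx | hx
    · rw [abs_of_nonpos hx, max_eq_right hx, max_eq_left (by linarith)]; ring
    · rw [abs_of_nonneg hx, max_eq_left hx, max_eq_right (by linarith)]; ring
  rw [habs, hψ_add _ (hL_sup f hf 0 h0L) _ (hL_sup _ hnegL 0 h0L),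
    hsup f hf, hsup _ hnegL, hψ_neg f hf]
  rcases le_total (ψ f) 0 with hx | hx
  · rw [abs_of_nonpos hx, max_eq_right hx, max_eq_left (by linarith)]; ring
  · rw [abs_of_nonneg hx, max_eq_left hx, max_eq_right (by linarith)]; ring
end

section
/- Let ψ be a linear functional on a truncated vector sublattice L of ℝ^X. Then ψ is a truncation homomorphism if and only if ψ is a lattice homomorphism and sup{ψ(f) : f ∈ L, f ≤ 1 pointwise} = 1. -/
lemma min_formula_aux (a b : ℝ) : min a b = 2⁻¹ * (a + b - |a - b|) := by
  rcases le_total a b with h | h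
  · rw [min_eq_left h, abs_of_nonpos (by linarith)]; ring
  · rw [min_eq_right h, abs_of_nonneg (by linarith)]; ring

lemma max_formula_aux (a b : ℝ) : max a b = a + b - min a b := by
  rcases le_total a b with h | h
  · rw [min_eq_left h, max_eq_right h]; ring
  · rw [min_eq_right h, max_eq_left h]; ring

theorem stmt_5 {X : Type*} [Nonempty X] (L : Set (X → ℝ))
    (hL_add : ∀ f ∈ L, ∀ g ∈ L, f + g ∈ L)
    (hL_smul : ∀ (c : ℝ), ∀ f ∈ L, c • f ∈ L)
    (hL_sup : ∀ f ∈ L, ∀ g ∈ L, f ⊔ g ∈ L)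
    (hL_inf : ∀ f ∈ L, ∀ g ∈ L, f ⊓ g ∈ L)
    (hL_trunc : ∀ f ∈ L, f ⊓ 1 ∈ L)
    (ψ : (X → ℝ) → ℝ)
    (hψ_add : ∀ f ∈ L, ∀ g ∈ L, ψ (f + g) = ψ f + ψ g)
    (hψ_smul : ∀ (c : ℝ), ∀ f ∈ L, ψ (c • f) = c * ψ f) :
    ((∃ f ∈ L, ψ f ≠ 0) ∧ ∀ f ∈ L, ψ (f ⊓ 1) = min (ψ f) 1) ↔
      ((∀ f ∈ L, ψ |f| = |ψ f|) ∧ IsLUB (ψ '' {f | f ∈ L ∧ f ≤ 1}) 1) := by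
  -- generic closure facts
  have hsub : ∀ f ∈ L, ∀ g ∈ L, f - g ∈ L := fun f hf g hg => by
    have := hL_add f hf ((-1:ℝ) • g) (hL_smul (-1) g hg)
    simpa [sub_eq_add_neg, neg_one_smul] using this
  have hψsub : ∀ f ∈ L, ∀ g ∈ L, ψ (f - g) = ψ f - ψ g := fun f hf g hg => by
    have h1 := hψ_add f hf ((-1:ℝ) • g) (hL_smul (-1) g hg)
    have h2 := hψ_smul (-1) g hg
    have e : f - g = f + (-1:ℝ) • g := by
      funext x; simp [sub_eq_add_neg]
    rw [e, h1, h2]; ring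
  have habsmem : ∀ f ∈ L, |f| ∈ L := fun f hf => by
    have h := hL_sup f hf ((-1:ℝ) • f) (hL_smul (-1) f hf)
    have e : |f| = f ⊔ (-1:ℝ) • f := by
      funext x
      simp [abs_eq_max_neg]
    rwa [e]
  constructor
  · rintro ⟨⟨f₀, hf₀L, hf₀⟩, htr⟩
    have h0L : (0 : X → ℝ) ∈ L := by
      simpa using hL_smul 0 f₀ hf₀L
    have hψ0 : ψ (0 : X → ℝ) = 0 := by
      have := hψ_smul 0 f₀ hf₀L
      simpa using this
    -- nonpositive elements have nonpositive value
    have hneg : ∀ h ∈ L, h ≤ 0 → ψ h ≤ 0 := by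
      intro h hhL hh
      by_contra hc
      push_neg at hc
      have key : ∀ c : ℝ, 0 < c → c * ψ h ≤ 1 := by
        intro c hcpos
        have hch : c • h ∈ L := hL_smul c h hhL
        have hch0 : c • h ≤ 0 := by
          intro x
          simp only [Pi.smul_apply, smul_eq_mul, Pi.zero_apply]
          have hx : h x ≤ 0 := hh x
          nlinarith
        have he : (c • h) ⊓ 1 = c • h := by
          apply inf_eq_left.mpr
          exact le_trans hch0 zero_le_one
        have := htr (c • h) hch
        rw [he, hψ_smul c h hhL] at this
        rw [this]
        exact min_le_right _ _
      have h2 := key (2 / ψ h) (by positivity)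
      rw [div_mul_cancel₀ 2 (ne_of_gt hc)] at h2
      linarith
    have hpos : ∀ f ∈ L, 0 ≤ f → 0 ≤ ψ f := by
      intro f hf h0f
      have hm : (-1:ℝ) • f ∈ L := hL_smul (-1) f hf
      have : (-1:ℝ) • f ≤ 0 := by
        intro x; simp [neg_nonpos]
        exact h0f x
      have := hneg _ hm this
      rw [hψ_smul (-1) f hf] at this
      linarith
    have hmono : ∀ f ∈ L, ∀ g ∈ L, f ≤ g → ψ f ≤ ψ g := by
      intro f hf g hg hfg
      have h1 : g - f ∈ L := hsub g hg f hf
      have h2 : (0:X→ℝ) ≤ g - f := by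
        intro x; simp [sub_nonneg]; exact hfg x
      have := hpos _ h1 h2
      rw [hψsub g hg f hf] at this
      linarith
    -- scaled truncation
    have hkey : ∀ f ∈ L, ∀ ε : ℝ, 0 < ε →
        ∃ u ∈ L, (∀ x, u x = min (f x) ε) ∧ ψ u = min (ψ f) ε := by
      intro f hf ε hε
      refine ⟨ε • ((ε⁻¹ • f) ⊓ 1), hL_smul ε _ (hL_trunc _ (hL_smul ε⁻¹ f hf)), ?_, ?_⟩
      · intro x
        have : (ε • ((ε⁻¹ • f) ⊓ 1)) x = ε * min (ε⁻¹ * f x) 1 := by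
          simp
        rw [this, mul_min_of_nonneg _ _ hε.le, mul_one,
          mul_inv_cancel_left₀ (ne_of_gt hε)]
      · rw [hψ_smul ε _ (hL_trunc _ (hL_smul ε⁻¹ f hf)),
          htr _ (hL_smul ε⁻¹ f hf), hψ_smul ε⁻¹ f hf,
          mul_min_of_nonneg _ _ hε.le, mul_one,
          mul_inv_cancel_left₀ (ne_of_gt hε)]
    -- ψ (h ⊓ 0) = min (ψ h) 0
    have hinf0 : ∀ h ∈ L, ψ (h ⊓ 0) = min (ψ h) 0 := by
      intro h hhL
      have hmem : h ⊓ 0 ∈ L := hL_inf h hhL 0 h0L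
      have hle : ψ (h ⊓ 0) ≤ min (ψ h) 0 := by
        apply le_of_forall_pos_le_add
        intro ε hε
        obtain ⟨u, huL, hux, hψu⟩ := hkey h hhL ε hε
        have h1 : h ⊓ 0 ≤ u := by
          intro x
          rw [hux x]
          simp only [Pi.inf_apply, Pi.zero_apply]
          exact min_le_min (le_refl _) hε.le
        have h2 : ψ (h ⊓ 0) ≤ ψ u := hmono _ hmem _ huL h1
        rw [hψu] at h2
        rcases le_total (ψ h) 0 with hc | hc
        · calc ψ (h ⊓ 0) ≤ min (ψ h) ε := h2
            _ ≤ ψ h := min_le_left _ _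
            _ = min (ψ h) 0 := (min_eq_left hc).symm
            _ ≤ min (ψ h) 0 + ε := by linarith
        · calc ψ (h ⊓ 0) ≤ min (ψ h) ε := h2
            _ ≤ ε := min_le_right _ _
            _ ≤ min (ψ h) 0 + ε := by rw [min_eq_right hc]; linarith
      have hge : min (ψ h) 0 ≤ ψ (h ⊓ 0) := by
        apply le_of_forall_pos_le_add
        intro ε hε
        obtain ⟨u, huL, hux, hψu⟩ := hkey h hhL ε hε
        -- v := u - h ⊓ 0, 0 ≤ v ≤ ε
        have hvL : u - h ⊓ 0 ∈ L := hsub u huL _ hmem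
        have hvle : ∀ x, (u - h ⊓ 0) x ≤ ε := by
          intro x
          simp only [Pi.sub_apply, Pi.inf_apply, Pi.zero_apply, hux x]
          rcases le_total (h x) 0 with hc | hc
          · rw [min_eq_left hc, min_eq_left (le_trans hc hε.le)]; linarith
          · rw [min_eq_right hc]
            have := min_le_right (h x) ε
            linarith
        have hψv : ψ (u - h ⊓ 0) ≤ ε := by
          obtain ⟨w, hwL, hwx, hψw⟩ := hkey _ hvL ε hε
          have hwv : w = u - h ⊓ 0 := by
            funext x
            rw [hwx x, min_eq_left (hvle x)]
          rw [hwv] at hψw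
          rw [hψw]
          exact min_le_right _ _
        rw [hψsub u huL _ hmem] at hψv
        have : min (ψ h) 0 ≤ min (ψ h) ε := min_le_min (le_refl _) hε.le
        rw [← hψu] at this
        linarith
      linarith
    -- binary infima
    have hinf : ∀ f ∈ L, ∀ g ∈ L, ψ (f ⊓ g) = min (ψ f) (ψ g) := by
      intro f hf g hg
      have he : f ⊓ g = g + (f - g) ⊓ 0 := by
        funext x
        simp only [Pi.inf_apply, Pi.add_apply, Pi.sub_apply, Pi.zero_apply]
        rcases le_total (f x) (g x) with hc | hc
        · rw [min_eq_left hc, min_eq_left (by linarith)]; ring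
        · rw [min_eq_right hc, min_eq_right (by linarith)]; ring
      have hfgL : (f - g) ⊓ 0 ∈ L := hL_inf _ (hsub f hf g hg) 0 h0L
      rw [he, hψ_add g hg _ hfgL, hinf0 _ (hsub f hf g hg), hψsub f hf g hg]
      rcases le_total (ψ f) (ψ g) with hc | hc
      · rw [min_eq_left hc, min_eq_left (by linarith)]; ring
      · rw [min_eq_right hc, min_eq_right (by linarith)]; ring
    -- lattice homomorphism
    have hlat : ∀ f ∈ L, ψ |f| = |ψ f| := by
      intro f hf
      have hmf : (-1:ℝ) • f ∈ L := hL_smul (-1) f hf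
      have he : |f| = (f + (-1:ℝ) • f) - f ⊓ ((-1:ℝ) • f) := by
        funext x
        simp only [Pi.sub_apply, Pi.add_apply, Pi.smul_apply, Pi.inf_apply,
          Pi.abs_apply, smul_eq_mul, neg_one_mul]
        rcases le_total (f x) 0 with hc | hc
        · rw [abs_of_nonpos hc, min_eq_left (by linarith)]; ring
        · rw [abs_of_nonneg hc, min_eq_right (by linarith)]; ring
      rw [he, hψsub _ (hL_add f hf _ hmf) _ (hL_inf f hf _ hmf),
        hψ_add f hf _ hmf, hinf f hf _ hmf, hψ_smul (-1) f hf]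
      rcases le_total (ψ f) 0 with hc | hc
      · rw [abs_of_nonpos hc, min_eq_left (by linarith)]; ring
      · rw [abs_of_nonneg hc, min_eq_right (by linarith)]; ring
    refine ⟨hlat, ?_, ?_⟩
    · -- 1 is an upper bound
      rintro y ⟨f, ⟨hfL, hf1⟩, rfl⟩
      have he : f ⊓ 1 = f := inf_eq_left.mpr hf1
      have := htr f hfL
      rw [he] at this
      rw [this]
      exact min_le_right _ _
    · -- 1 is least: in fact 1 is attained
      intro b hb
      have habs : |f₀| ∈ L := habsmem f₀ hf₀L
      have hψabs : ψ |f₀| = |ψ f₀| := hlat f₀ hf₀L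
      have hpos' : 0 < ψ |f₀| := by rw [hψabs]; exact abs_pos.mpr hf₀
      set g : X → ℝ := (2 / ψ |f₀|) • |f₀| with hg
      have hgL : g ∈ L := hL_smul _ _ habs
      have hψg : ψ g = 2 := by
        rw [hg, hψ_smul _ _ habs, div_mul_cancel₀ 2 (ne_of_gt hpos')]
      have hgt : g ⊓ 1 ∈ L := hL_trunc g hgL
      have hψgt : ψ (g ⊓ 1) = 1 := by
        rw [htr g hgL, hψg]; norm_num
      have hmem : ψ (g ⊓ 1) ∈ ψ '' {f | f ∈ L ∧ f ≤ 1} := by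
        exact ⟨g ⊓ 1, ⟨hgt, inf_le_right⟩, rfl⟩
      have := hb hmem
      rwa [hψgt] at this
  · rintro ⟨hlat, hlub⟩
    -- the image is nonempty
    have hne : (ψ '' {f | f ∈ L ∧ f ≤ 1}).Nonempty := by
      by_contra hc
      rw [Set.not_nonempty_iff_eq_empty] at hc
      have h0ub : (0:ℝ) ∈ upperBounds (ψ '' {f | f ∈ L ∧ f ≤ 1}) := by
        rw [hc]; intro y hy; exact absurd hy (Set.notMem_empty y)
      have := hlub.2 h0ub
      linarith
    obtain ⟨y₀, f₁, ⟨hf₁L, _⟩, _⟩ := hne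
    have h0L : (0 : X → ℝ) ∈ L := by simpa using hL_smul 0 f₁ hf₁L
    have hψ0 : ψ (0 : X → ℝ) = 0 := by simpa using hψ_smul 0 f₁ hf₁L
    have hpos : ∀ f ∈ L, 0 ≤ f → 0 ≤ ψ f := by
      intro f hf h0f
      have he : |f| = f := by
        funext x; exact abs_of_nonneg (h0f x)
      have := hlat f hf
      rw [he] at this
      rw [this]
      exact abs_nonneg _
    have hmono : ∀ f ∈ L, ∀ g ∈ L, f ≤ g → ψ f ≤ ψ g := by
      intro f hf g hg hfg
      have h1 : g - f ∈ L := hsub g hg f hf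
      have h2 : (0:X→ℝ) ≤ g - f := by
        intro x; simp [sub_nonneg]; exact hfg x
      have := hpos _ h1 h2
      rw [hψsub g hg f hf] at this
      linarith
    have hinf : ∀ f ∈ L, ∀ g ∈ L, ψ (f ⊓ g) = min (ψ f) (ψ g) := by
      intro f hf g hg
      have huL : f - g ∈ L := hsub f hf g hg
      have habsL : |f - g| ∈ L := habsmem _ huL
      have he : f ⊓ g = (2⁻¹:ℝ) • (f + g - |f - g|) := by
        funext x
        simp only [Pi.inf_apply, Pi.smul_apply, Pi.sub_apply, Pi.add_apply,
          Pi.abs_apply, smul_eq_mul]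
        exact min_formula_aux _ _
      rw [he, hψ_smul _ _ (hsub _ (hL_add f hf g hg) _ habsL),
        hψsub _ (hL_add f hf g hg) _ habsL, hψ_add f hf g hg,
        hlat _ huL, hψsub f hf g hg]
      exact (min_formula_aux _ _).symm
    constructor
    · -- ψ is nonzero
      by_contra hc
      push_neg at hc
      have h0ub : (0:ℝ) ∈ upperBounds (ψ '' {f | f ∈ L ∧ f ≤ 1}) := by
        rintro y ⟨f, ⟨hfL, _⟩, rfl⟩
        rw [hc f hfL]
      have := hlub.2 h0ub
      linarith
    · -- the truncation property
      intro f hf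
      have htL : f ⊓ 1 ∈ L := hL_trunc f hf
      have hle1 : ψ (f ⊓ 1) ≤ ψ f := hmono _ htL f hf inf_le_left
      have hle2 : ψ (f ⊓ 1) ≤ 1 :=
        hlub.1 ⟨f ⊓ 1, ⟨htL, inf_le_right⟩, rfl⟩
      have hge : min (ψ f) 1 ≤ ψ (f ⊓ 1) := by
        apply le_of_forall_pos_le_add
        intro ε hε
        -- find g ∈ L, g ≤ 1 with ψ g > 1 - ε
        have hex : ∃ g, (g ∈ L ∧ g ≤ 1) ∧ 1 - ε < ψ g := by
          by_contra hc
          push_neg at hc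
          have hub : (1 - ε : ℝ) ∈ upperBounds (ψ '' {f | f ∈ L ∧ f ≤ 1}) := by
            rintro y ⟨g, hg, rfl⟩
            exact hc g hg
          have := hlub.2 hub
          linarith
        obtain ⟨g, ⟨hgL, hg1⟩, hψg⟩ := hex
        have h1 : f ⊓ g ≤ f ⊓ 1 := inf_le_inf_left f hg1
        have h2 : ψ (f ⊓ g) ≤ ψ (f ⊓ 1) :=
          hmono _ (hL_inf f hf g hgL) _ htL h1
        rw [hinf f hf g hgL] at h2
        have h3 : min (ψ f) 1 - ε ≤ min (ψ f) (ψ g) := by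
          rcases le_total (ψ f) (ψ g) with hc | hc
          · rw [min_eq_left hc]
            have := min_le_left (ψ f) (1:ℝ)
            linarith
          · rw [min_eq_right hc]
            have := min_le_right (ψ f) (1:ℝ)
            linarith
        linarith
      have : ψ (f ⊓ 1) ≤ min (ψ f) 1 := le_min hle1 hle2
      linarith
end

section
/- A linear functional ψ on a unital vector sublattice L of ℝ^X (a vector sublattice containing the constant function 1) is a truncation homomorphism if and only if ψ is a lattice homomorphism with ψ(1) = 1. -/
theorem stmt_6 {X : Type*} [Nonempty X] (L : Set (X → ℝ))
    (hL_add : ∀ f ∈ L, ∀ g ∈ L, f + g ∈ L)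
    (hL_smul : ∀ (c : ℝ), ∀ f ∈ L, c • f ∈ L)
    (hL_sup : ∀ f ∈ L, ∀ g ∈ L, f ⊔ g ∈ L)
    (hL_inf : ∀ f ∈ L, ∀ g ∈ L, f ⊓ g ∈ L)
    (hL_one : (1 : X → ℝ) ∈ L)
    (ψ : (X → ℝ) → ℝ)
    (hψ_add : ∀ f ∈ L, ∀ g ∈ L, ψ (f + g) = ψ f + ψ g)
    (hψ_smul : ∀ (c : ℝ), ∀ f ∈ L, ψ (c • f) = c * ψ f) :
    ((∃ f ∈ L, ψ f ≠ 0) ∧ ∀ f ∈ L, ψ (f ⊓ 1) = min (ψ f) 1) ↔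
      ((∀ f ∈ L, ψ |f| = |ψ f|) ∧ ψ 1 = 1) := by
  have hL_neg : ∀ f ∈ L, -f ∈ L := fun f hf => by
    simpa using hL_smul (-1) f hf
  have hψ_neg : ∀ f ∈ L, ψ (-f) = -ψ f := fun f hf => by
    have := hψ_smul (-1) f hf
    simpa using this
  have hL_sub : ∀ f ∈ L, ∀ g ∈ L, f - g ∈ L := fun f hf g hg => by
    simpa [sub_eq_add_neg] using hL_add f hf (-g) (hL_neg g hg)
  have hψ_sub : ∀ f ∈ L, ∀ g ∈ L, ψ (f - g) = ψ f - ψ g := fun f hf g hg => by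
    rw [sub_eq_add_neg, hψ_add f hf (-g) (hL_neg g hg), hψ_neg g hg, ← sub_eq_add_neg]
  constructor
  · rintro ⟨⟨f₀, hf₀, hf₀ne⟩, htr⟩
    -- translation lemma
    have trans : ∀ f ∈ L, ∀ c : ℝ,
        ψ (f ⊓ c • (1 : X → ℝ)) = min (ψ f + (1 - c) * ψ 1) 1 + (c - 1) * ψ 1 := by
      intro f hf c
      have hg : f + (1 - c) • (1 : X → ℝ) ∈ L :=
        hL_add f hf _ (hL_smul (1 - c) 1 hL_one)
      have key : f ⊓ c • (1 : X → ℝ) =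
          ((f + (1 - c) • (1 : X → ℝ)) ⊓ 1) + (c - 1) • (1 : X → ℝ) := by
        funext x
        simp only [Pi.inf_apply, Pi.add_apply, Pi.smul_apply, Pi.one_apply, smul_eq_mul,
          mul_one]
        rcases le_total (f x) c with h | h
        · rw [min_eq_left h, min_eq_left (by linarith)]; ring
        · rw [min_eq_right h, min_eq_right (by linarith)]; ring
      rw [key, hψ_add _ (hL_inf _ hg _ hL_one) _ (hL_smul (c - 1) 1 hL_one),
        htr _ hg, hψ_add f hf _ (hL_smul (1 - c) 1 hL_one),
        hψ_smul, hψ_smul] <;> try exact hL_one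
    -- scaling lemma
    have scale : ∀ f ∈ L, ∀ c : ℝ, 0 < c →
        ψ (f ⊓ c • (1 : X → ℝ)) = min (ψ f) c := by
      intro f hf c hc
      have key : f ⊓ c • (1 : X → ℝ) = c • ((c⁻¹ • f) ⊓ 1) := by
        funext x
        simp only [Pi.inf_apply, Pi.smul_apply, Pi.one_apply, smul_eq_mul, mul_one]
        rw [mul_min_of_nonneg _ _ hc.le, mul_one, mul_inv_cancel_left₀ hc.ne']
      rw [key, hψ_smul _ _ (hL_inf _ (hL_smul c⁻¹ f hf) _ hL_one),
        htr _ (hL_smul c⁻¹ f hf), hψ_smul c⁻¹ f hf,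
        mul_min_of_nonneg _ _ hc.le, mul_one, mul_inv_cancel_left₀ hc.ne']
    -- ψ 1 ∈ {0, 1}
    have h11 : ψ 1 = min (ψ 1) 1 := by
      have := htr 1 hL_one
      rwa [inf_idem] at this
    have hhalf : min (ψ 1) (1 / 2) = (1 / 2) * ψ 1 := by
      have key : (1 : X → ℝ) ⊓ (1 / 2 : ℝ) • (1 : X → ℝ) = (1 / 2 : ℝ) • (1 : X → ℝ) := by
        funext x
        simp only [Pi.inf_apply, Pi.smul_apply, Pi.one_apply, smul_eq_mul, mul_one]
        rw [min_eq_right (by norm_num)]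
      have h1 := scale 1 hL_one (1 / 2) (by norm_num)
      rw [key, hψ_smul _ _ hL_one] at h1
      linarith [h1]
    have hone : ψ 1 = 0 ∨ ψ 1 = 1 := by
      rcases le_total (ψ 1) (1 / 2) with h | h
      · left
        rw [min_eq_left h] at hhalf
        linarith
      · right
        rw [min_eq_right h] at hhalf
        linarith
    -- rule out ψ 1 = 0
    have hψ1 : ψ 1 = 1 := by
      rcases hone with h0 | h1
      · exfalso
        obtain ⟨g, hg, hgpos⟩ : ∃ g ∈ L, 0 < ψ g := by
          rcases hf₀ne.lt_or_gt with h | h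
          · exact ⟨-f₀, hL_neg f₀ hf₀, by rw [hψ_neg f₀ hf₀]; linarith⟩
          · exact ⟨f₀, hf₀, h⟩
        set m := min (ψ g) 1 with hm
        have hmpos : 0 < m := lt_min hgpos one_pos
        have e1 := trans g hg (m / 2)
        have e2 := scale g hg (m / 2) (by linarith)
        rw [e1] at e2
        rw [h0] at e2
        simp only [mul_zero, add_zero] at e2
        have hmle : m ≤ ψ g := min_le_left _ _
        have : min (ψ g) (m / 2) = m / 2 := min_eq_right (by linarith)
        rw [this] at e2
        rw [← hm] at e2
        linarith
      · exact h1
    refine ⟨?_, hψ1⟩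
    -- with ψ 1 = 1, get ψ (f ⊓ c•1) = min (ψ f) c
    have const : ∀ f ∈ L, ∀ c : ℝ, ψ (f ⊓ c • (1 : X → ℝ)) = min (ψ f) c := by
      intro f hf c
      rw [trans f hf c, hψ1, mul_one, mul_one]
      rcases le_total (ψ f) c with h | h
      · rw [min_eq_left (by linarith), min_eq_left h]; ring
      · rw [min_eq_right (by linarith), min_eq_right h]; ring
    have inf0 : ∀ f ∈ L, ψ (f ⊓ 0) = min (ψ f) 0 := by
      intro f hf
      have : (0 : X → ℝ) = (0 : ℝ) • (1 : X → ℝ) := by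
        funext x; simp
      rw [this]
      exact const f hf 0
    -- general inf
    have infgen : ∀ f ∈ L, ∀ g ∈ L, ψ (f ⊓ g) = min (ψ f) (ψ g) := by
      intro f hf g hg
      have key : f ⊓ g = g + ((f - g) ⊓ 0) := by
        funext x
        simp only [Pi.inf_apply, Pi.add_apply, Pi.sub_apply, Pi.zero_apply]
        rcases le_total (f x) (g x) with h | h
        · rw [min_eq_left h, min_eq_left (by linarith)]; ring
        · rw [min_eq_right h, min_eq_right (by linarith)]; ring
      rw [key, hψ_add g hg _ (hL_inf _ (hL_sub f hf g hg) _
        (by simpa using hL_smul 0 1 hL_one)),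
        inf0 _ (hL_sub f hf g hg), hψ_sub f hf g hg]
      rcases le_total (ψ f) (ψ g) with h | h
      · rw [min_eq_left h, min_eq_left (by linarith)]; ring
      · rw [min_eq_right h, min_eq_right (by linarith)]; ring
    intro f hf
    have habs : |f| = -(f ⊓ (-f)) := by
      funext x
      simp only [Pi.abs_apply, Pi.neg_apply, Pi.inf_apply]
      rcases le_total (f x) 0 with h | h
      · rw [abs_of_nonpos h, min_eq_left (by linarith)]
      · rw [abs_of_nonneg h, min_eq_right (by linarith)]; ring
    rw [habs, hψ_neg _ (hL_inf f hf _ (hL_neg f hf)), infgen f hf _ (hL_neg f hf),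
      hψ_neg f hf]
    rcases le_total (ψ f) 0 with h | h
    · rw [abs_of_nonpos h, min_eq_left (by linarith)]
    · rw [abs_of_nonneg h, min_eq_right (by linarith)]; ring
  · rintro ⟨hlat, hone⟩
    refine ⟨⟨1, hL_one, by rw [hone]; norm_num⟩, ?_⟩
    intro f hf
    have key : f ⊓ 1 = (2⁻¹ : ℝ) • (f + 1 - |f - 1|) := by
      funext x
      simp only [Pi.inf_apply, Pi.smul_apply, Pi.sub_apply, Pi.add_apply, Pi.one_apply,
        Pi.abs_apply, smul_eq_mul]
      rcases le_total (f x) 1 with h | h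
      · rw [min_eq_left h, abs_of_nonpos (by linarith)]; ring
      · rw [min_eq_right h, abs_of_nonneg (by linarith)]; ring
    have hmem : f + 1 - |f - 1| ∈ L := by
      have habsmem : |f - 1| ∈ L := by
        have : |f - 1| = (f - 1) ⊔ (-(f - 1)) := by
          funext x
          simp [Pi.sup_apply, abs_eq_max_neg]
        rw [this]
        exact hL_sup _ (hL_sub f hf 1 hL_one) _ (hL_neg _ (hL_sub f hf 1 hL_one))
      exact hL_sub _ (hL_add f hf 1 hL_one) _ habsmem
    rw [key, hψ_smul _ _ hmem,
      hψ_sub _ (hL_add f hf 1 hL_one) _ (by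
        have : |f - 1| = (f - 1) ⊔ (-(f - 1)) := by
          funext x; simp [Pi.sup_apply, abs_eq_max_neg]
        rw [this]
        exact hL_sup _ (hL_sub f hf 1 hL_one) _ (hL_neg _ (hL_sub f hf 1 hL_one))),
      hψ_add f hf 1 hL_one, hone, hlat _ (hL_sub f hf 1 hL_one),
      hψ_sub f hf 1 hL_one, hone]
    rcases le_total (ψ f) 1 with h | h
    · rw [min_eq_left h, abs_of_nonpos (by linarith)]; ring
    · rw [min_eq_right h, abs_of_nonneg (by linarith)]; ring
end

section
/- Let L be a truncated vector sublattice of ℝ^X and ψ a truncation homomorphism on L. Then for all f, g ∈ L and λ ∈ ℝ, the function |f + λ| ∧ g (pointwise min(|f(x)+λ|, g(x))) belongs to L and ψ(|f + λ| ∧ g) = min(|ψ(f) + λ|, ψ(g)). -/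
lemma st8_key2 (a b l : ℝ) (hb : 0 ≤ b) (_hl : 0 < l) :
    min |a + l| b = max (a + min (b - a) l) 0 + b - max (a + b + min (-a) l) 0 := by
  rcases abs_cases (a + l) with ⟨h1, h2⟩ | ⟨h1, h2⟩ <;> rw [h1] <;>
    simp only [min_def, max_def] <;> split_ifs <;> linarith

lemma st8_split_g (u b : ℝ) (hu : 0 ≤ u) : min u b = min u (max b 0) + min b 0 := by
  rcases le_total b 0 with h | h <;> simp only [min_def, max_def] <;> split_ifs <;> linarith

section
variable {X : Type*} (L : Set (X → ℝ))
    (hL_add : ∀ f ∈ L, ∀ g ∈ L, f + g ∈ L)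
    (hL_smul : ∀ (c : ℝ), ∀ f ∈ L, c • f ∈ L)
    (hL_sup : ∀ f ∈ L, ∀ g ∈ L, f ⊔ g ∈ L)
    (hL_inf : ∀ f ∈ L, ∀ g ∈ L, f ⊓ g ∈ L)
    (hL_trunc : ∀ f ∈ L, f ⊓ 1 ∈ L)
    (ψ : (X → ℝ) → ℝ)
    (hψ_add : ∀ f ∈ L, ∀ g ∈ L, ψ (f + g) = ψ f + ψ g)
    (hψ_smul : ∀ (c : ℝ), ∀ f ∈ L, ψ (c • f) = c * ψ f)
    (hψ_trunc : ∀ f ∈ L, ψ (f ⊓ 1) = min (ψ f) 1)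

include hL_smul hψ_smul in
lemma st8_neg_mem (f : X → ℝ) (hf : f ∈ L) : -f ∈ L ∧ ψ (-f) = -ψ f := by
  have h : (-1 : ℝ) • f = -f := neg_one_smul _ _
  refine ⟨by rw [← h]; exact hL_smul (-1) f hf, ?_⟩
  rw [← h, hψ_smul (-1) f hf]; ring

include hL_add hL_smul hψ_add hψ_smul in
lemma st8_sub_mem (f : X → ℝ) (hf : f ∈ L) (g : X → ℝ) (hg : g ∈ L) :
    f - g ∈ L ∧ ψ (f - g) = ψ f - ψ g := by
  obtain ⟨h1, h2⟩ := st8_neg_mem L hL_smul ψ hψ_smul g hg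
  have h : f - g = f + -g := by ring
  refine ⟨by rw [h]; exact hL_add f hf _ h1, ?_⟩
  rw [h, hψ_add f hf _ h1, h2]; ring

include hL_smul hL_trunc hψ_smul hψ_trunc in
lemma st8_trunc_mem (c : ℝ) (hc : 0 < c) (f : X → ℝ) (hf : f ∈ L) :
    (fun x => min (f x) c) ∈ L ∧ ψ (fun x => min (f x) c) = min (ψ f) c := by
  have hm0 : c⁻¹ • f ∈ L := hL_smul c⁻¹ f hf
  have hm : (c⁻¹ • f) ⊓ 1 ∈ L := hL_trunc _ hm0
  have he : (fun x => min (f x) c) = c • ((c⁻¹ • f) ⊓ 1) := by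
    funext x
    simp only [Pi.smul_apply, Pi.inf_apply, Pi.one_apply, smul_eq_mul]
    rw [mul_min_of_nonneg _ _ hc.le, mul_one, mul_inv_cancel_left₀ hc.ne']
  constructor
  · rw [he]; exact hL_smul c _ hm
  · rw [he, hψ_smul c _ hm, hψ_trunc _ hm0, hψ_smul c⁻¹ f hf,
      mul_min_of_nonneg _ _ hc.le, mul_one, mul_inv_cancel_left₀ hc.ne']

include hL_smul hL_trunc hψ_smul hψ_trunc in
lemma st8_pos (h : X → ℝ) (hh : h ∈ L) (hpos : ∀ x, 0 ≤ h x) : 0 ≤ ψ h := by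
  obtain ⟨hnL, hnψ⟩ := st8_neg_mem L hL_smul ψ hψ_smul h hh
  have key : ∀ c : ℝ, 0 < c → -ψ h ≤ c := by
    intro c hc
    obtain ⟨-, hv⟩ := st8_trunc_mem L hL_smul hL_trunc ψ hψ_smul hψ_trunc c hc (-h) hnL
    have he : (fun x => min ((-h) x) c) = -h := by
      funext x
      exact min_eq_left (le_trans (by simpa using hpos x) hc.le)
    rw [he, hnψ] at hv
    have h2 := min_le_right (-ψ h) c
    linarith [hv, h2]
  by_contra hcon
  push_neg at hcon
  have := key (-ψ h / 2) (by linarith)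
  linarith

include hL_add hL_smul hL_sup hL_trunc hψ_add hψ_smul hψ_trunc in
lemma st8_sup0 (f : X → ℝ) (hf : f ∈ L) (h0 : (0 : X → ℝ) ∈ L) (hψ0 : ψ 0 = 0) :
    f ⊔ 0 ∈ L ∧ ψ (f ⊔ 0) = max (ψ f) 0 := by
  have hmem : f ⊔ 0 ∈ L := hL_sup f hf 0 h0
  refine ⟨hmem, ?_⟩
  obtain ⟨hdL, hdψ⟩ := st8_sub_mem L hL_add hL_smul ψ hψ_add hψ_smul (f ⊔ 0) hmem f hf
  set A := ψ (f ⊔ 0) with hA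
  set B := ψ f with hB
  have hApos : 0 ≤ A := st8_pos L hL_smul hL_trunc ψ hψ_smul hψ_trunc _ hmem
    (fun x => by simp [Pi.sup_apply])
  have key : ∀ c : ℝ, 0 < c → min A c = min B c + (A - B) := by
    intro c hc
    obtain ⟨htL, htv⟩ := st8_trunc_mem L hL_smul hL_trunc ψ hψ_smul hψ_trunc c hc f hf
    obtain ⟨-, htv2⟩ := st8_trunc_mem L hL_smul hL_trunc ψ hψ_smul hψ_trunc c hc (f ⊔ 0) hmem
    have he : (fun x => min ((f ⊔ 0) x) c) = (fun x => min (f x) c) + (f ⊔ 0 - f) := by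
      funext x
      simp only [Pi.add_apply, Pi.sub_apply, Pi.sup_apply, Pi.zero_apply]
      rcases le_total (f x) 0 with h | h
      · rw [max_eq_right h, min_eq_left (le_trans h hc.le), min_eq_left hc.le]; ring
      · rw [max_eq_left h]; ring
    rw [he, hψ_add _ htL _ hdL, htv, hdψ] at htv2
    rw [htv2]
  rcases le_or_gt B 0 with hB0 | hB0
  · -- A = 0
    have hA0 : A ≤ 0 := by
      by_contra hcon
      push_neg at hcon
      have := key (A / 2) (by linarith)
      rw [min_eq_right (by linarith), min_eq_left (by linarith)] at this
      linarith
    rw [max_eq_right hB0]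
    linarith
  · -- A = B
    have hge : B ≤ A := by
      have hd : 0 ≤ A - B := by
        rw [← hdψ]
        exact st8_pos L hL_smul hL_trunc ψ hψ_smul hψ_trunc _ hdL
          (fun x => by simp [Pi.sub_apply, Pi.sup_apply, le_max_left])
      linarith
    have := key B hB0
    rw [min_eq_right hge, min_self] at this
    rw [max_eq_left hB0.le]
    linarith

include hL_add hL_smul hL_sup hL_trunc hψ_add hψ_smul hψ_trunc in
lemma st8_max (h0 : (0 : X → ℝ) ∈ L) (hψ0 : ψ 0 = 0)
    (f : X → ℝ) (hf : f ∈ L) (g : X → ℝ) (hg : g ∈ L) :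
    ψ (f ⊔ g) = max (ψ f) (ψ g) := by
  obtain ⟨hdL, hdψ⟩ := st8_sub_mem L hL_add hL_smul ψ hψ_add hψ_smul f hf g hg
  obtain ⟨hsL, hsψ⟩ := st8_sup0 L hL_add hL_smul hL_sup hL_trunc ψ hψ_add hψ_smul hψ_trunc
    (f - g) hdL h0 hψ0
  have he : f ⊔ g = g + (f - g) ⊔ 0 := by
    funext x
    simp only [Pi.add_apply, Pi.sup_apply, Pi.sub_apply, Pi.zero_apply]
    rcases le_total (f x) (g x) with h | h
    · rw [max_eq_right h, max_eq_right (by linarith)]; ring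
    · rw [max_eq_left h, max_eq_left (by linarith)]; ring
  rw [he, hψ_add g hg _ hsL, hsψ, hdψ]
  rcases le_total (ψ f) (ψ g) with h | h
  · rw [max_eq_right h, max_eq_right (by linarith)]; ring
  · rw [max_eq_left h, max_eq_left (by linarith)]; ring

include hL_add hL_smul hL_sup hL_trunc hψ_add hψ_smul hψ_trunc in
lemma st8_min (h0 : (0 : X → ℝ) ∈ L) (hψ0 : ψ 0 = 0)
    (f : X → ℝ) (hf : f ∈ L) (g : X → ℝ) (hg : g ∈ L) :
    ψ (f ⊓ g) = min (ψ f) (ψ g) := by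
  have hsL : f ⊔ g ∈ L := hL_sup f hf g hg
  have hsψ := st8_max L hL_add hL_smul hL_sup hL_trunc ψ hψ_add hψ_smul hψ_trunc h0 hψ0
    f hf g hg
  obtain ⟨haL, haψ⟩ : f + g ∈ L ∧ ψ (f + g) = ψ f + ψ g :=
    ⟨hL_add f hf g hg, hψ_add f hf g hg⟩
  obtain ⟨hdL, hdψ⟩ := st8_sub_mem L hL_add hL_smul ψ hψ_add hψ_smul (f + g) haL (f ⊔ g) hsL
  have he : f ⊓ g = f + g - f ⊔ g := by
    funext x
    simp only [Pi.add_apply, Pi.sub_apply, Pi.sup_apply, Pi.inf_apply]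
    rcases le_total (f x) (g x) with h | h
    · rw [min_eq_left h, max_eq_right h]; ring
    · rw [min_eq_right h, max_eq_left h]; ring
  rw [he, hdψ, haψ, hsψ]
  rcases le_total (ψ f) (ψ g) with h | h
  · rw [min_eq_left h, max_eq_right h]; ring
  · rw [min_eq_right h, max_eq_left h]; ring

end

theorem stmt_8 {X : Type*} [Nonempty X] (L : Set (X → ℝ))
    (hL_add : ∀ f ∈ L, ∀ g ∈ L, f + g ∈ L)
    (hL_smul : ∀ (c : ℝ), ∀ f ∈ L, c • f ∈ L)
    (hL_sup : ∀ f ∈ L, ∀ g ∈ L, f ⊔ g ∈ L)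
    (hL_inf : ∀ f ∈ L, ∀ g ∈ L, f ⊓ g ∈ L)
    (hL_trunc : ∀ f ∈ L, f ⊓ 1 ∈ L)
    (ψ : (X → ℝ) → ℝ)
    (hψ_add : ∀ f ∈ L, ∀ g ∈ L, ψ (f + g) = ψ f + ψ g)
    (hψ_smul : ∀ (c : ℝ), ∀ f ∈ L, ψ (c • f) = c * ψ f)
    (hψ_ne : ∃ f ∈ L, ψ f ≠ 0)
    (hψ_trunc : ∀ f ∈ L, ψ (f ⊓ 1) = min (ψ f) 1) :
    ∀ f ∈ L, ∀ g ∈ L, ∀ (l : ℝ),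
      (fun x => min (|f x + l|) (g x)) ∈ L ∧
      ψ (fun x => min (|f x + l|) (g x)) = min (|ψ f + l|) (ψ g) := by
  -- zero
  obtain ⟨f0, hf0, -⟩ := hψ_ne
  have h0 : (0 : X → ℝ) ∈ L := by
    have h : (0 : ℝ) • f0 = 0 := zero_smul _ _
    rw [← h]; exact hL_smul 0 f0 hf0
  have hψ0 : ψ 0 = 0 := by
    have h : (0 : ℝ) • f0 = 0 := zero_smul _ _
    rw [← h, hψ_smul 0 f0 hf0, zero_mul]
  -- main claim for l > 0 and g nonneg
  have main_pos : ∀ f ∈ L, ∀ g ∈ L, (∀ x, 0 ≤ g x) → ∀ l : ℝ, 0 < l →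
      (fun x => min (|f x + l|) (g x)) ∈ L ∧
      ψ (fun x => min (|f x + l|) (g x)) = min (|ψ f + l|) (ψ g) := by
    intro f hf g hg hgpos l hl
    obtain ⟨hd1L, hd1ψ⟩ := st8_sub_mem L hL_add hL_smul ψ hψ_add hψ_smul g hg f hf
    obtain ⟨hnL, hnψ⟩ := st8_neg_mem L hL_smul ψ hψ_smul f hf
    obtain ⟨hT1L, hT1ψ⟩ := st8_trunc_mem L hL_smul hL_trunc ψ hψ_smul hψ_trunc l hl (g - f) hd1L
    obtain ⟨hT2L, hT2ψ⟩ := st8_trunc_mem L hL_smul hL_trunc ψ hψ_smul hψ_trunc l hl (-f) hnL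
    set T1 : X → ℝ := fun x => min ((g - f) x) l with hT1
    set T2 : X → ℝ := fun x => min ((-f) x) l with hT2
    have hu1L : f + T1 ∈ L := hL_add f hf T1 hT1L
    have hu2L : f + g + T2 ∈ L := hL_add _ (hL_add f hf g hg) T2 hT2L
    obtain ⟨hs1L, hs1ψ⟩ := st8_sup0 L hL_add hL_smul hL_sup hL_trunc ψ hψ_add hψ_smul hψ_trunc
      (f + T1) hu1L h0 hψ0
    obtain ⟨hs2L, hs2ψ⟩ := st8_sup0 L hL_add hL_smul hL_sup hL_trunc ψ hψ_add hψ_smul hψ_trunc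
      (f + g + T2) hu2L h0 hψ0
    have hwL : (f + T1) ⊔ 0 + g ∈ L := hL_add _ hs1L g hg
    obtain ⟨hfinL, hfinψ⟩ := st8_sub_mem L hL_add hL_smul ψ hψ_add hψ_smul
      ((f + T1) ⊔ 0 + g) hwL ((f + g + T2) ⊔ 0) hs2L
    have he : (fun x => min (|f x + l|) (g x)) = (f + T1) ⊔ 0 + g - (f + g + T2) ⊔ 0 := by
      funext x
      simp only [Pi.add_apply, Pi.sub_apply, Pi.sup_apply, Pi.zero_apply,
        hT1, hT2, Pi.neg_apply]
      rw [st8_key2 (f x) (g x) l (hgpos x) hl]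
    rw [he]
    refine ⟨hfinL, ?_⟩
    rw [hfinψ, hψ_add _ hs1L g hg, hs1ψ, hs2ψ, hψ_add f hf T1 hT1L,
      hψ_add _ (hL_add f hf g hg) T2 hT2L, hψ_add f hf g hg, hT1ψ, hT2ψ, hd1ψ, hnψ]
    have hψg : 0 ≤ ψ g :=
      st8_pos L hL_smul hL_trunc ψ hψ_smul hψ_trunc g hg hgpos
    rw [st8_key2 (ψ f) (ψ g) l hψg hl]
  -- main claim for l > 0, arbitrary g
  have main_posl : ∀ f ∈ L, ∀ g ∈ L, ∀ l : ℝ, 0 < l →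
      (fun x => min (|f x + l|) (g x)) ∈ L ∧
      ψ (fun x => min (|f x + l|) (g x)) = min (|ψ f + l|) (ψ g) := by
    intro f hf g hg l hl
    obtain ⟨hgpL, hgpψ⟩ := st8_sup0 L hL_add hL_smul hL_sup hL_trunc ψ hψ_add hψ_smul hψ_trunc
      g hg h0 hψ0
    have hgppos : ∀ x, 0 ≤ (g ⊔ 0) x := fun x => by simp [Pi.sup_apply]
    obtain ⟨hFL, hFψ⟩ := main_pos f hf (g ⊔ 0) hgpL hgppos l hl
    have hgmL : g ⊓ 0 ∈ L := hL_inf g hg 0 h0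
    have hgmψ : ψ (g ⊓ 0) = min (ψ g) 0 := by
      rw [st8_min L hL_add hL_smul hL_sup hL_trunc ψ hψ_add hψ_smul hψ_trunc h0 hψ0
        g hg 0 h0, hψ0]
    have he : (fun x => min (|f x + l|) (g x)) =
        (fun x => min (|f x + l|) ((g ⊔ 0) x)) + g ⊓ 0 := by
      funext x
      simp only [Pi.add_apply, Pi.sup_apply, Pi.inf_apply, Pi.zero_apply]
      exact st8_split_g _ _ (abs_nonneg _)
    rw [he]
    refine ⟨hL_add _ hFL _ hgmL, ?_⟩
    rw [hψ_add _ hFL _ hgmL, hFψ, hgpψ, hgmψ]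
    exact (st8_split_g _ _ (abs_nonneg _)).symm
  intro f hf g hg l
  rcases lt_trichotomy l 0 with hl | hl | hl
  · obtain ⟨hnL, hnψ⟩ := st8_neg_mem L hL_smul ψ hψ_smul f hf
    obtain ⟨hFL, hFψ⟩ := main_posl (-f) hnL g hg (-l) (by linarith)
    have he : (fun x => min (|(-f) x + -l|) (g x)) = (fun x => min (|f x + l|) (g x)) := by
      funext x
      simp only [Pi.neg_apply]
      rw [show -f x + -l = -(f x + l) by ring, abs_neg]
    rw [he] at hFL hFψ
    rw [hnψ, show -ψ f + -l = -(ψ f + l) by ring, abs_neg] at hFψ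
    exact ⟨hFL, hFψ⟩
  · subst hl
    obtain ⟨hnL, hnψ⟩ := st8_neg_mem L hL_smul ψ hψ_smul f hf
    have hsL : f ⊔ -f ∈ L := hL_sup f hf _ hnL
    have hsψ : ψ (f ⊔ -f) = max (ψ f) (-ψ f) := by
      rw [st8_max L hL_add hL_smul hL_sup hL_trunc ψ hψ_add hψ_smul hψ_trunc h0 hψ0
        f hf _ hnL, hnψ]
    have he : (fun x => min (|f x + 0|) (g x)) = (f ⊔ -f) ⊓ g := by
      funext x
      simp only [Pi.inf_apply, Pi.sup_apply, Pi.neg_apply, add_zero,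
        abs_eq_max_neg]
    rw [he]
    refine ⟨hL_inf _ hsL g hg, ?_⟩
    rw [st8_min L hL_add hL_smul hL_sup hL_trunc ψ hψ_add hψ_smul hψ_trunc h0 hψ0
      _ hsL g hg, hsψ, add_zero, abs_eq_max_neg]
  · exact main_posl f hf g hg l hl
end

section
/- Let ψ be a truncation homomorphism on a truncated vector sublattice L of ℝ^X. Then for every n ≥ 1, every f₁,…,fₙ ∈ L, and every ε > 0, there exists x ∈ X with |ψ(f_k) − f_k(x)| ≤ ε for all k = 1,…,n. -/
theorem stmt_9 {X : Type*} [Nonempty X] (L : Set (X → ℝ))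
    (hL_add : ∀ f ∈ L, ∀ g ∈ L, f + g ∈ L)
    (hL_smul : ∀ (c : ℝ), ∀ f ∈ L, c • f ∈ L)
    (hL_sup : ∀ f ∈ L, ∀ g ∈ L, f ⊔ g ∈ L)
    (hL_inf : ∀ f ∈ L, ∀ g ∈ L, f ⊓ g ∈ L)
    (hL_trunc : ∀ f ∈ L, f ⊓ 1 ∈ L)
    (ψ : (X → ℝ) → ℝ)
    (hψ_add : ∀ f ∈ L, ∀ g ∈ L, ψ (f + g) = ψ f + ψ g)
    (hψ_smul : ∀ (c : ℝ), ∀ f ∈ L, ψ (c • f) = c * ψ f)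
    (hψ_ne : ∃ f ∈ L, ψ f ≠ 0)
    (hψ_trunc : ∀ f ∈ L, ψ (f ⊓ 1) = min (ψ f) 1) :
    ∀ (n : ℕ), 1 ≤ n → ∀ f : Fin n → (X → ℝ), (∀ k, f k ∈ L) →
      ∀ ε > (0 : ℝ), ∃ x : X, ∀ k, |ψ (f k) - f k x| ≤ ε := by
  obtain ⟨f₀, hf₀L, hf₀⟩ := hψ_ne
  have hL_zero : (0 : X → ℝ) ∈ L := by
    have := hL_smul 0 f₀ hf₀L; simpa using this
  have hψ_zero : ψ 0 = 0 := by
    have := hψ_smul 0 f₀ hf₀L; simpa using this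
  have hL_sub : ∀ f ∈ L, ∀ g ∈ L, f - g ∈ L := by
    intro f hf g hg
    have := hL_add f hf ((-1:ℝ) • g) (hL_smul (-1) g hg)
    simpa [sub_eq_add_neg, neg_one_smul] using this
  have hψ_sub : ∀ f ∈ L, ∀ g ∈ L, ψ (f - g) = ψ f - ψ g := by
    intro f hf g hg
    have h1 := hψ_add f hf ((-1:ℝ) • g) (hL_smul (-1) g hg)
    have h2 := hψ_smul (-1) g hg
    rw [h2] at h1
    have : f + (-1:ℝ) • g = f - g := by
      funext x; simp [sub_eq_add_neg]
    rw [this] at h1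
    linarith
  -- positivity
  have hψ_pos : ∀ f ∈ L, (∀ x, 0 ≤ f x) → 0 ≤ ψ f := by
    intro f hf hf0
    by_contra h
    push_neg at h
    set s : ℝ := 2 / (-ψ f) with hs
    have hspos : 0 < s := by
      rw [hs]; apply div_pos two_pos; linarith
    have hmem := hL_smul (-s) f hf
    have htr := hψ_trunc ((-s) • f) hmem
    have heq : ((-s) • f) ⊓ 1 = (-s) • f := by
      funext x
      have hle : ((-s) • f) x ≤ (1 : X → ℝ) x := by
        simp only [Pi.smul_apply, Pi.one_apply, smul_eq_mul]
        nlinarith [hf0 x]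
      rw [Pi.inf_apply, min_eq_left hle]
    rw [heq, hψ_smul (-s) f hf] at htr
    have h2 : (-s) * ψ f = 2 := by
      rw [hs]
      have hne' : ψ f ≠ 0 := ne_of_lt h
      field_simp
    rw [h2] at htr
    have : (2:ℝ) ≤ 1 := by
      rw [htr]; exact min_le_right _ _
    linarith
  have hψ_mono : ∀ f ∈ L, ∀ g ∈ L, (∀ x, f x ≤ g x) → ψ f ≤ ψ g := by
    intro f hf g hg hle
    have h1 := hψ_pos (g - f) (hL_sub g hg f hf) (fun x => by
      simp [Pi.sub_apply]; linarith [hle x])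
    have h2 := hψ_sub g hg f hf
    linarith [h1, h2.symm.le]
  -- truncation at arbitrary positive level
  have key : ∀ t : ℝ, 0 < t → ∀ a : ℝ, t * min (t⁻¹ * a) 1 = min a t := by
    intro t ht a
    rcases le_total a t with h | h
    · have h1 : t⁻¹ * a ≤ 1 := by
        rw [← div_eq_inv_mul]
        exact (div_le_one ht).mpr h
      rw [min_eq_left h1, min_eq_left h]
      field_simp
    · have h1 : (1:ℝ) ≤ t⁻¹ * a := by
        rw [← div_eq_inv_mul]
        exact (one_le_div ht).mpr h
      rw [min_eq_right h1, min_eq_right h]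
      ring
  have htrunc : ∀ f ∈ L, ∀ t : ℝ, 0 < t →
      (fun x => min (f x) t) ∈ L ∧ ψ (fun x => min (f x) t) = min (ψ f) t := by
    intro f hf t ht
    have hmem1 := hL_smul t⁻¹ f hf
    have hmem2 := hL_trunc _ hmem1
    have hmem3 := hL_smul t _ hmem2
    have heq : t • ((t⁻¹ • f) ⊓ 1) = (fun x => min (f x) t) := by
      funext x
      simp only [Pi.smul_apply, Pi.inf_apply, Pi.one_apply, smul_eq_mul]
      exact key t ht (f x)
    constructor
    · rw [← heq]; exact hmem3
    · rw [← heq, hψ_smul t _ hmem2, hψ_trunc _ hmem1, hψ_smul t⁻¹ f hf]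
      exact key t ht (ψ f)
  -- disjointness lemma
  have hdisj : ∀ p ∈ L, ∀ m ∈ L, (∀ x, 0 ≤ p x) → (∀ x, 0 ≤ m x) →
      (∀ x, min (p x) (m x) = 0) → ψ p ≤ 0 ∨ ψ m ≤ 0 := by
    intro p hp m hm hp0 hm0 hmin
    by_contra hc
    push_neg at hc
    obtain ⟨ha, hb⟩ := hc
    set a := ψ p with hadef
    set b := ψ m with hbdef
    have hpa := hL_smul (2/a) p hp
    have hub := hL_smul (2/b) m hm
    set u := ((2/a) • p) ⊓ 1 with hudef
    set v := ((2/b) • m) ⊓ 1 with hvdef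
    have huL : u ∈ L := hL_trunc _ hpa
    have hvL : v ∈ L := hL_trunc _ hub
    have hψu : ψ u = 1 := by
      rw [hudef, hψ_trunc _ hpa, hψ_smul (2/a) p hp]
      rw [div_mul_cancel₀ 2 (ne_of_gt ha)]
      norm_num
    have hψv : ψ v = 1 := by
      rw [hvdef, hψ_trunc _ hub, hψ_smul (2/b) m hm]
      rw [div_mul_cancel₀ 2 (ne_of_gt hb)]
      norm_num
    have hsum : ∀ x, u x + v x ≤ 1 := by
      intro x
      have hux : u x = min (2/a * p x) 1 := by simp [hudef, Pi.inf_apply]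
      have hvx : v x = min (2/b * m x) 1 := by simp [hvdef, Pi.inf_apply]
      have hux1 : u x ≤ 1 := by rw [hux]; exact min_le_right _ _
      have hvx1 : v x ≤ 1 := by rw [hvx]; exact min_le_right _ _
      rcases min_eq_iff.mp (hmin x) with ⟨hpx, _⟩ | ⟨hmx, _⟩
      · have : u x = 0 := by
          rw [hux, hpx]; simp
        linarith
      · have : v x = 0 := by
          rw [hvx, hmx]; simp
        linarith
    have hw : u + v ∈ L := hL_add u huL v hvL
    have heq : (u + v) ⊓ 1 = u + v := by
      funext x
      simp only [Pi.inf_apply, Pi.add_apply, Pi.one_apply]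
      exact min_eq_left (hsum x)
    have := hψ_trunc (u + v) hw
    rw [heq, hψ_add u huL v hvL, hψu, hψv] at this
    have hle := this.le.trans (min_le_right ((1:ℝ)+1) 1)
    linarith
  -- positive part
  have hpos_part : ∀ f ∈ L, ψ (f ⊔ 0) = max (ψ f) 0 := by
    intro f hf
    have hpL : f ⊔ 0 ∈ L := hL_sup f hf 0 hL_zero
    have hmL : (f ⊔ 0) - f ∈ L := hL_sub _ hpL f hf
    have hp0 : ∀ x, 0 ≤ (f ⊔ 0) x := fun x => by
      simp [Pi.sup_apply, le_max_iff]
    have hm0 : ∀ x, 0 ≤ ((f ⊔ 0) - f) x := fun x => by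
      simp [Pi.sub_apply, Pi.sup_apply, le_max_iff]
    have hmin : ∀ x, min ((f ⊔ 0) x) (((f ⊔ 0) - f) x) = 0 := by
      intro x
      simp only [Pi.sub_apply, Pi.sup_apply, Pi.zero_apply]
      rcases le_total (f x) 0 with h | h
      · rw [max_eq_right h, zero_sub, min_eq_left (by linarith : (0:ℝ) ≤ -f x)]
      · rw [max_eq_left h]
        rw [sub_self, min_eq_right h]
    have hψm : ψ ((f ⊔ 0) - f) = ψ (f ⊔ 0) - ψ f := hψ_sub _ hpL f hf
    have h1 : 0 ≤ ψ (f ⊔ 0) := hψ_pos _ hpL hp0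
    have h2 : 0 ≤ ψ (f ⊔ 0) - ψ f := by rw [← hψm]; exact hψ_pos _ hmL hm0
    rcases hdisj _ hpL _ hmL hp0 hm0 hmin with h | h
    · have hp_eq : ψ (f ⊔ 0) = 0 := le_antisymm h h1
      have hfle : ψ f ≤ 0 := by linarith
      rw [hp_eq, max_eq_right hfle]
    · rw [hψm] at h
      have : ψ (f ⊔ 0) = ψ f := by linarith
      rw [this, max_eq_left (by linarith)]
  -- inf formula
  have hinf : ∀ f ∈ L, ∀ g ∈ L, ψ (f ⊓ g) = min (ψ f) (ψ g) := by
    intro f hf g hg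
    have hfgL : f - g ∈ L := hL_sub f hf g hg
    have hpL : (f - g) ⊔ 0 ∈ L := hL_sup _ hfgL 0 hL_zero
    have heq : f ⊓ g = f - ((f - g) ⊔ 0) := by
      funext x
      simp only [Pi.inf_apply, Pi.sub_apply, Pi.sup_apply, Pi.zero_apply]
      rcases le_total (f x) (g x) with h | h
      · rw [min_eq_left h, max_eq_right (by linarith)]; ring
      · rw [min_eq_right h, max_eq_left (by linarith)]; ring
    rw [heq, hψ_sub f hf _ hpL, hpos_part _ hfgL, hψ_sub f hf g hg]
    rcases le_total (ψ f) (ψ g) with h | h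
    · rw [max_eq_right (by linarith), min_eq_left h]; ring
    · rw [max_eq_left (by linarith), min_eq_right h]; ring
  -- unit
  have hunit : ∃ u ∈ L, (∀ x, 0 ≤ u x) ∧ ψ u = 1 := by
    rcases lt_or_gt_of_ne hf₀ with h | h
    · set g := ((-1:ℝ) • f₀) ⊔ 0 with hg
      have hgL : g ∈ L := hL_sup _ (hL_smul (-1) f₀ hf₀L) 0 hL_zero
      have hψg : ψ g = -ψ f₀ := by
        rw [hg, hpos_part _ (hL_smul (-1) f₀ hf₀L), hψ_smul (-1) f₀ hf₀L]
        rw [max_eq_left (by linarith)]; ring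
      refine ⟨(ψ g)⁻¹ • g, hL_smul _ g hgL, fun x => ?_, ?_⟩
      · have h0 : 0 ≤ g x := by simp [hg, Pi.sup_apply, le_max_iff]
        have hgpos : 0 < ψ g := by rw [hψg]; linarith
        simp only [Pi.smul_apply, smul_eq_mul]
        positivity
      · rw [hψ_smul _ g hgL, inv_mul_cancel₀ (by rw [hψg]; linarith)]
    · set g := f₀ ⊔ 0 with hg
      have hgL : g ∈ L := hL_sup f₀ hf₀L 0 hL_zero
      have hψg : ψ g = ψ f₀ := by
        rw [hg, hpos_part f₀ hf₀L, max_eq_left (by linarith)]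
      refine ⟨(ψ g)⁻¹ • g, hL_smul _ g hgL, fun x => ?_, ?_⟩
      · have h0 : 0 ≤ g x := by simp [hg, Pi.sup_apply, le_max_iff]
        have hgpos : 0 < ψ g := by rw [hψg]; linarith
        simp only [Pi.smul_apply, smul_eq_mul]
        positivity
      · rw [hψ_smul _ g hgL, inv_mul_cancel₀ (by rw [hψg]; linarith)]
  -- gadget
  have hgadget : ∀ f ∈ L, ∀ δ : ℝ, 0 < δ → δ < ψ f →
      ∃ g ∈ L, ψ g = δ ∧ ∀ x, 0 < g x → |f x - ψ f| < δ := by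
    intro f hf δ hδ hδc
    set c := ψ f with hc
    have hcpos : 0 < c := lt_trans hδ hδc
    obtain ⟨hTc, hψTc⟩ := htrunc f hf c hcpos
    obtain ⟨hTm, hψTm⟩ := htrunc f hf (c - δ) (by linarith)
    obtain ⟨hTp, hψTp⟩ := htrunc f hf (c + δ) (by linarith)
    set Tc : X → ℝ := fun x => min (f x) c
    set Tm : X → ℝ := fun x => min (f x) (c - δ)
    set Tp : X → ℝ := fun x => min (f x) (c + δ)
    set g := (Tc - Tm) - (Tp - Tc) with hgdef
    have hgL : g ∈ L := hL_sub _ (hL_sub Tc hTc Tm hTm) _ (hL_sub Tp hTp Tc hTc)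
    refine ⟨g, hgL, ?_, ?_⟩
    · rw [hgdef, hψ_sub _ (hL_sub Tc hTc Tm hTm) _ (hL_sub Tp hTp Tc hTc),
        hψ_sub Tc hTc Tm hTm, hψ_sub Tp hTp Tc hTc, hψTc, hψTm, hψTp]
      rw [min_self, min_eq_right (by linarith : c - δ ≤ c), min_eq_left (by linarith : c ≤ c + δ)]
      ring
    · intro x hx
      by_contra hcon
      push_neg at hcon
      have hgx : g x = (min (f x) c - min (f x) (c - δ)) - (min (f x) (c + δ) - min (f x) c) := by
        simp [hgdef, Pi.sub_apply, Tc, Tm, Tp]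
      rcases le_abs.mp hcon with h' | h'
      · -- f x - c ≥ δ, i.e. f x ≥ c + δ
        have h1 : c + δ ≤ f x := by linarith
        rw [min_eq_right (by linarith), min_eq_right (by linarith),
          min_eq_right h1] at hgx
        rw [hgx] at hx; linarith
      · -- f x ≤ c - δ
        have h1 : f x ≤ c - δ := by linarith
        rw [min_eq_left (by linarith), min_eq_left h1,
          min_eq_left (by linarith)] at hgx
        rw [hgx] at hx; linarith
  -- finite infima
  have hinf_fin : ∀ {ι : Type} (s : Finset ι) (hs : s.Nonempty) (P : ι → (X → ℝ)),
      (∀ k ∈ s, P k ∈ L) →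
      s.inf' hs P ∈ L ∧ ψ (s.inf' hs P) = s.inf' hs (fun k => ψ (P k)) := by
    intro ι s hs P
    induction hs using Finset.Nonempty.cons_induction with
    | singleton a => intro h; simpa using h a (by simp)
    | cons a s ha hs ih =>
      intro h
      have h1 : ∀ k ∈ s, P k ∈ L := fun k hk => h k (Finset.mem_cons_of_mem hk)
      obtain ⟨ih1, ih2⟩ := ih h1
      have haL : P a ∈ L := h a (Finset.mem_cons_self a s)
      rw [Finset.inf'_cons, Finset.inf'_cons]
      refine ⟨hL_inf _ haL _ ih1, ?_⟩
      rw [hinf _ haL _ ih1, ih2]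
      exact hs
  -- main proof
  intro n hn f hfL ε hε
  have hne : (Finset.univ : Finset (Fin n)).Nonempty := by
    refine ⟨⟨0, hn⟩, Finset.mem_univ _⟩
  obtain ⟨u, huL, hu0, hu1⟩ := hunit
  set B : ℝ := Finset.univ.sup' hne (fun k => |ψ (f k)|) with hB
  have hB0 : 0 ≤ B := le_trans (abs_nonneg (ψ (f ⟨0, hn⟩))) (Finset.le_sup' (fun k => |ψ (f k)|) (Finset.mem_univ (⟨0, hn⟩ : Fin n)))
  set M : ℝ := 1 + B with hM
  have hM1 : 1 ≤ M := by linarith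
  have hMk : ∀ k, |ψ (f k)| ≤ M - 1 := by
    intro k
    have hkB : |ψ (f k)| ≤ B := Finset.le_sup' (fun k => |ψ (f k)|) (Finset.mem_univ k)
    rw [hM]
    linarith
  set δ : ℝ := min ε 1 / (M + 1) with hδdef
  have hδpos : 0 < δ := by
    apply div_pos (lt_min hε one_pos) (by linarith)
  have hδ1 : δ < 1 := by
    rw [hδdef, div_lt_one (by linarith)]
    calc min ε 1 ≤ 1 := min_le_right _ _
    _ < M + 1 := by linarith
  have hδε : δ * (1 + M) ≤ ε := by
    have hM0 : (0:ℝ) < M + 1 := by linarith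
    have : δ * (1 + M) = min ε 1 := by
      rw [hδdef, div_mul_eq_mul_div, show (1:ℝ) + M = M + 1 from by ring,
        mul_div_assoc, div_self (ne_of_gt hM0), mul_one]
    rw [this]
    exact min_le_left _ _
  -- shifted functions
  set h : Fin n → (X → ℝ) := fun k => f k + M • u with hh
  have hhL : ∀ k, h k ∈ L := fun k => hL_add _ (hfL k) _ (hL_smul M u huL)
  have hψh : ∀ k, ψ (h k) = ψ (f k) + M := by
    intro k
    rw [hh]
    simp only
    rw [hψ_add _ (hfL k) _ (hL_smul M u huL), hψ_smul M u huL, hu1, mul_one]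
  have hψh_big : ∀ k, δ < ψ (h k) := by
    intro k
    have h1 := hMk k
    have h2 := abs_le.mp h1
    rw [hψh k]
    have : 1 ≤ ψ (f k) + M := by linarith [h2.1]
    linarith
  -- gadgets
  have hGk : ∀ k, ∃ g ∈ L, ψ g = δ ∧ ∀ x, 0 < g x → |h k x - ψ (h k)| < δ :=
    fun k => hgadget (h k) (hhL k) δ hδpos (hψh_big k)
  choose G hGL hψG hGgood using hGk
  obtain ⟨Gu, hGuL, hψGu, hGugood⟩ := hgadget u huL δ hδpos (by rw [hu1]; exact hδ1)
  -- combine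
  set Hf := Gu ⊓ (Finset.univ.inf' hne G) with hHf
  obtain ⟨hinfL, hinfψ⟩ := hinf_fin Finset.univ hne G (fun k _ => hGL k)
  have hHfL : Hf ∈ L := hL_inf _ hGuL _ hinfL
  have hψHf : ψ Hf = δ := by
    rw [hHf, hinf _ hGuL _ hinfL, hinfψ, hψGu]
    have : (Finset.univ.inf' hne fun k => ψ (G k)) = δ := by
      have : (fun k => ψ (G k)) = fun _ : Fin n => δ := funext hψG
      rw [this, Finset.inf'_const]
    rw [this, min_self]
  have hx : ∃ x, 0 < Hf x := by
    by_contra hcon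
    push_neg at hcon
    have : ψ Hf ≤ ψ 0 := hψ_mono _ hHfL _ hL_zero (fun x => by
      simpa using hcon x)
    rw [hψ_zero, hψHf] at this
    linarith
  obtain ⟨x, hx⟩ := hx
  refine ⟨x, fun k => ?_⟩
  have hHfx : Hf x = min (Gu x) ((Finset.univ.inf' hne G) x) := by
    simp [hHf, Pi.inf_apply]
  have hGux : 0 < Gu x := lt_of_lt_of_le hx (by rw [hHfx]; exact min_le_left _ _)
  have hinfx : 0 < (Finset.univ.inf' hne G) x :=
    lt_of_lt_of_le hx (by rw [hHfx]; exact min_le_right _ _)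
  have hGkx : 0 < G k x := by
    have hle : (Finset.univ.inf' hne G) x ≤ G k x := by
      rw [Finset.inf'_apply]
      exact Finset.inf'_le _ (Finset.mem_univ k)
    linarith
  have h1 : |h k x - ψ (h k)| < δ := hGgood k x hGkx
  have h2 : |u x - 1| < δ := by
    have := hGugood x hGux
    rwa [hu1] at this
  have hhx : h k x = f k x + M * u x := by
    simp [hh, Pi.add_apply, Pi.smul_apply, smul_eq_mul]
  have hψhk := hψh k
  have key2 : |ψ (f k) - f k x| ≤ δ + M * δ := by
    have e1 : ψ (f k) - f k x = (ψ (h k) - h k x) - M * (1 - u x) := by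
      rw [hψhk, hhx]; ring
    rw [e1]
    have a1 : |ψ (h k) - h k x| < δ := by rwa [abs_sub_comm] at h1
    have a2 : |1 - u x| < δ := by rwa [abs_sub_comm] at h2
    calc |(ψ (h k) - h k x) - M * (1 - u x)| ≤ |ψ (h k) - h k x| + |M * (1 - u x)| :=
          abs_sub _ _
    _ ≤ δ + M * δ := by
        rw [abs_mul, abs_of_nonneg (by linarith : (0:ℝ) ≤ M)]
        have := mul_le_mul_of_nonneg_left a2.le (by linarith : (0:ℝ) ≤ M)
        linarith [a1.le]
  calc |ψ (f k) - f k x| ≤ δ + M * δ := key2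
  _ = δ * (1 + M) := by ring
  _ ≤ ε := hδε
end

section
/- Let ψ be a linear functional on a truncated vector sublattice L of ℝ^X. If ψ is a 2̄-evaluation (for all f, g ∈ L and ε > 0 there exists x ∈ X with |f(x) − ψ(f)| ≤ ε and |g(x) − ψ(g)| ≤ ε), then ψ is a truncation homomorphism, i.e., ψ(f ∧ 1) = min(ψ(f),1) for all f ∈ L. -/
lemma min_lipschitz_aux (a b : ℝ) : |min a 1 - min b 1| ≤ |a - b| := by
  rcases abs_cases (a - b) with ⟨h1, h2⟩ | ⟨h1, h2⟩ <;>
    rcases abs_cases (min a 1 - min b 1) with ⟨g1, g2⟩ | ⟨g1, g2⟩ <;>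
    simp only [min_def] at * <;> split_ifs at * <;> linarith

theorem stmt_10 {X : Type*} [Nonempty X] (L : Set (X → ℝ))
    (hL_add : ∀ f ∈ L, ∀ g ∈ L, f + g ∈ L)
    (hL_smul : ∀ (c : ℝ), ∀ f ∈ L, c • f ∈ L)
    (hL_sup : ∀ f ∈ L, ∀ g ∈ L, f ⊔ g ∈ L)
    (hL_inf : ∀ f ∈ L, ∀ g ∈ L, f ⊓ g ∈ L)
    (hL_trunc : ∀ f ∈ L, f ⊓ 1 ∈ L)
    (ψ : (X → ℝ) → ℝ)
    (hψ_add : ∀ f ∈ L, ∀ g ∈ L, ψ (f + g) = ψ f + ψ g)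
    (hψ_smul : ∀ (c : ℝ), ∀ f ∈ L, ψ (c • f) = c * ψ f)
    (heval2 : ∀ f ∈ L, ∀ g ∈ L, ∀ ε > (0 : ℝ),
      ∃ x : X, |f x - ψ f| ≤ ε ∧ |g x - ψ g| ≤ ε) :
    ∀ f ∈ L, ψ (f ⊓ 1) = min (ψ f) 1 := by
  intro f hf
  apply eq_of_forall_dist_le
  intro ε hε
  obtain ⟨x, hx1, hx2⟩ := heval2 f hf (f ⊓ 1) (hL_trunc f hf) (ε / 2) (by linarith)
  have hfx : (f ⊓ 1) x = min (f x) 1 := rfl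
  rw [Real.dist_eq]
  have key := min_lipschitz_aux (f x) (ψ f)
  calc |ψ (f ⊓ 1) - min (ψ f) 1|
      ≤ |ψ (f ⊓ 1) - (f ⊓ 1) x| + |(f ⊓ 1) x - min (ψ f) 1| := abs_sub_le _ _ _
    _ ≤ ε / 2 + ε / 2 := by
        apply add_le_add
        · rw [abs_sub_comm]; exact hx2
        · rw [hfx]; exact le_trans key (le_trans hx1 le_rfl) |>.trans (by linarith)
    _ = ε := by ring
end

section
/- Let A be a subalgebra and truncated vector sublattice of ℝ^X. A nonzero linear functional ψ on A is a truncation homomorphism if and only if ψ is a positive algebra homomorphism (ψ(fg) = ψ(f)ψ(g) and ψ(f) ≥ 0 for f ≥ 0). -/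
private lemma min_scale (t a : ℝ) (ht : 0 < t) : t * min (t⁻¹ * a) 1 = min a t := by
  rcases le_total a t with h | h
  · have h1 : t⁻¹ * a ≤ 1 := by
      rw [← inv_mul_cancel₀ ht.ne']
      exact mul_le_mul_of_nonneg_left h (by positivity)
    rw [min_eq_left h1, min_eq_left h, ← mul_assoc, mul_inv_cancel₀ ht.ne', one_mul]
  · have h1 : (1:ℝ) ≤ t⁻¹ * a := by
      rw [← inv_mul_cancel₀ ht.ne']
      exact mul_le_mul_of_nonneg_left h (by positivity)
    rw [min_eq_right h1, min_eq_right h, mul_one]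

private lemma min_diff_bounds (a c d : ℝ) (h : c ≤ d) :
    0 ≤ min a d - min a c ∧ min a d - min a c ≤ d - c := by
  simp only [min_def]
  split_ifs <;> constructor <;> linarith

private lemma min_mul_diff (a c d : ℝ) (h : c ≤ d) :
    min a c * (min a d - min a c) = c * (min a d - min a c) := by
  rcases le_total a c with h1 | h1
  · rw [min_eq_left h1, min_eq_left (h1.trans h)]; ring
  · rw [min_eq_right h1]

private lemma min_mul_sub (a t : ℝ) :
    min a t * (a - min a t) = t * (a - min a t) := by
  rcases le_total a t with h1 | h1
  · rw [min_eq_left h1]; ring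
  · rw [min_eq_right h1]

set_option maxHeartbeats 1600000 in
theorem stmt_14 {X : Type*} [Nonempty X] (A : Set (X → ℝ))
    (hA_add : ∀ f ∈ A, ∀ g ∈ A, f + g ∈ A)
    (hA_smul : ∀ (c : ℝ), ∀ f ∈ A, c • f ∈ A)
    (hA_mul : ∀ f ∈ A, ∀ g ∈ A, f * g ∈ A)
    (hA_sup : ∀ f ∈ A, ∀ g ∈ A, f ⊔ g ∈ A)
    (hA_inf : ∀ f ∈ A, ∀ g ∈ A, f ⊓ g ∈ A)
    (hA_trunc : ∀ f ∈ A, f ⊓ 1 ∈ A)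
    (ψ : (X → ℝ) → ℝ)
    (hψ_add : ∀ f ∈ A, ∀ g ∈ A, ψ (f + g) = ψ f + ψ g)
    (hψ_smul : ∀ (c : ℝ), ∀ f ∈ A, ψ (c • f) = c * ψ f)
    (hψ_ne : ∃ f ∈ A, ψ f ≠ 0) :
    (∀ f ∈ A, ψ (f ⊓ 1) = min (ψ f) 1) ↔
      ((∀ f ∈ A, ∀ g ∈ A, ψ (f * g) = ψ f * ψ g) ∧ (∀ f ∈ A, 0 ≤ f → 0 ≤ ψ f)) := by
  obtain ⟨f₀, hf₀A, hf₀⟩ := hψ_ne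
  have hneg : ∀ f ∈ A, -f ∈ A := fun f hf => by
    simpa [neg_one_smul] using hA_smul (-1) f hf
  have hsub : ∀ f ∈ A, ∀ g ∈ A, f - g ∈ A := fun f hf g hg => by
    simpa [sub_eq_add_neg] using hA_add f hf (-g) (hneg g hg)
  have hψneg : ∀ f ∈ A, ψ (-f) = -ψ f := fun f hf => by
    have := hψ_smul (-1) f hf
    simpa [neg_one_smul] using this
  have hψsub : ∀ f ∈ A, ∀ g ∈ A, ψ (f - g) = ψ f - ψ g := fun f hf g hg => by
    rw [sub_eq_add_neg, hψ_add f hf (-g) (hneg g hg), hψneg g hg, ← sub_eq_add_neg]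
  have hzA : (0 : X → ℝ) ∈ A := by simpa using hA_smul 0 f₀ hf₀A
  have hψ0 : ψ 0 = 0 := by
    have := hψ_smul 0 f₀ hf₀A
    simpa using this
  have hmono : (∀ f ∈ A, 0 ≤ f → 0 ≤ ψ f) →
      ∀ f ∈ A, ∀ g ∈ A, f ≤ g → ψ f ≤ ψ g := by
    intro hpos f hf g hg hle
    have h1 : (0 : X → ℝ) ≤ g - f := by
      intro x
      simp only [Pi.sub_apply, Pi.zero_apply]
      linarith [hle x]
    have h2 := hpos _ (hsub g hg f hf) h1
    rw [hψsub g hg f hf] at h2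
    linarith
  constructor
  · -- forward
    intro htr
    have hpos : ∀ f ∈ A, 0 ≤ f → 0 ≤ ψ f := by
      intro f hf h0
      by_contra hcon
      push_neg at hcon
      have hne : ψ f ≠ 0 := ne_of_lt hcon
      have hneg' : (0:ℝ) < -ψ f := by linarith
      set c : ℝ := 2 / (-ψ f) with hc
      have hc0 : (0:ℝ) < c := div_pos two_pos hneg'
      have hgA : (-c) • f ∈ A := hA_smul (-c) f hf
      have heq : ((-c) • f) ⊓ 1 = (-c) • f := by
        funext x
        simp only [Pi.inf_apply, Pi.one_apply, Pi.smul_apply, smul_eq_mul]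
        have h0x : (0:ℝ) ≤ f x := h0 x
        exact min_eq_left (by nlinarith)
      have h2 := htr _ hgA
      rw [heq, hψ_smul (-c) f hf] at h2
      have h3 : -c * ψ f ≤ 1 := h2 ▸ min_le_right _ 1
      have h4 : -c * ψ f = 2 := by
        rw [hc]; field_simp
      linarith
    have hmo := hmono hpos
    have htrt : ∀ t : ℝ, 0 < t → ∀ f ∈ A,
        (fun x => min (f x) t) ∈ A ∧ ψ (fun x => min (f x) t) = min (ψ f) t := by
      intro t ht f hf
      have hmem1 : t⁻¹ • f ∈ A := hA_smul _ f hf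
      have hmem2 : (t⁻¹ • f) ⊓ 1 ∈ A := hA_trunc _ hmem1
      have key : (fun x => min (f x) t) = t • ((t⁻¹ • f) ⊓ 1) := by
        funext x
        simp only [Pi.smul_apply, Pi.inf_apply, Pi.one_apply, smul_eq_mul]
        exact (min_scale t (f x) ht).symm
      constructor
      · rw [key]; exact hA_smul t _ hmem2
      · rw [key, hψ_smul t _ hmem2, htr _ hmem1, hψ_smul t⁻¹ f hf]
        exact min_scale t (ψ f) ht
    have hnull : ∀ u ∈ A, 0 ≤ u → ψ u = 0 → ψ (u * u) = 0 := by
      intro u hu h0 hu0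
      have hwA : u ⊓ 1 ∈ A := hA_trunc u hu
      have hw : ψ (u ⊓ 1) = 0 := by
        rw [htr u hu, hu0]; simp
      have hsq : (u ⊓ 1) * (u ⊓ 1) ≤ u ⊓ 1 := by
        intro x
        simp only [Pi.mul_apply, Pi.inf_apply, Pi.one_apply]
        have h0x : (0:ℝ) ≤ u x := h0 x
        rcases le_total (u x) 1 with h | h
        · rw [min_eq_left h]; nlinarith
        · rw [min_eq_right h]; nlinarith
      have hsq0 : (0 : X → ℝ) ≤ (u ⊓ 1) * (u ⊓ 1) := by
        intro x
        simp only [Pi.mul_apply, Pi.zero_apply, Pi.inf_apply, Pi.one_apply]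
        have h0x : (0:ℝ) ≤ u x := h0 x
        exact mul_nonneg (le_min h0x zero_le_one) (le_min h0x zero_le_one)
      have hwwA : (u ⊓ 1) * (u ⊓ 1) ∈ A := hA_mul _ hwA _ hwA
      have h1 : ψ ((u ⊓ 1) * (u ⊓ 1)) = 0 :=
        le_antisymm (by rw [← hw]; exact hmo _ hwwA _ hwA hsq) (hpos _ hwwA hsq0)
      have h2 : (u ⊓ 1) * (u ⊓ 1) = (u * u) ⊓ 1 := by
        funext x
        simp only [Pi.mul_apply, Pi.inf_apply, Pi.one_apply]
        have h0x : (0:ℝ) ≤ u x := h0 x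
        rcases le_total (u x) 1 with h | h
        · rw [min_eq_left h, min_eq_left (by nlinarith)]
        · rw [min_eq_right h, min_eq_right (by nlinarith)]; ring
      rw [h2, htr _ (hA_mul u hu u hu)] at h1
      have h3 : 0 ≤ ψ (u * u) := hpos _ (hA_mul u hu u hu)
        (by intro x; simp only [Pi.mul_apply, Pi.zero_apply]; exact mul_nonneg (h0 x) (h0 x))
      rcases le_total (ψ (u * u)) 1 with h | h
      · rwa [min_eq_left h] at h1
      · rw [min_eq_right h] at h1; norm_num at h1
    have hsqpos : ∀ f ∈ A, 0 ≤ f → ψ (f * f) = ψ f * ψ f := by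
      intro f hf h0
      have ht0 : 0 ≤ ψ f := hpos f hf h0
      rcases ht0.eq_or_lt with heq | hlt
      · rw [hnull f hf h0 heq.symm, ← heq]; ring
      · set t := ψ f with htdef
        have main : ∀ n : ℕ, 0 < n →
            t ^ 2 - t ^ 2 / n ≤ ψ (f * f) ∧ ψ (f * f) ≤ t ^ 2 := by
          intro n hn
          have hnR : (0:ℝ) < n := Nat.cast_pos.mpr hn
          set h : ℝ := t / n with hh
          have hhpos : 0 < h := div_pos hlt hnR
          set m : ℕ → (X → ℝ) := fun k => fun x => min (f x) (k * h) with hm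
          have hm0 : m 0 = (0:ℝ) • f := by
            funext x
            have h0x : (0:ℝ) ≤ f x := h0 x
            simp [hm, min_eq_right h0x]
          have hmmem : ∀ k : ℕ, m k ∈ A := by
            intro k
            rcases Nat.eq_zero_or_pos k with hk | hk
            · subst hk; rw [hm0]; exact hA_smul 0 f hf
            · have hkh : (0:ℝ) < (k:ℝ) * h := mul_pos (Nat.cast_pos.mpr hk) hhpos
              exact (htrt _ hkh f hf).1
          have hψm : ∀ k : ℕ, k ≤ n → ψ (m k) = k * h := by
            intro k hk
            rcases Nat.eq_zero_or_pos k with hk0 | hk0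
            · subst hk0; rw [hm0, hψ_smul 0 f hf]; simp
            · have hkh : (0:ℝ) < (k:ℝ) * h := mul_pos (Nat.cast_pos.mpr hk0) hhpos
              have h2 := (htrt _ hkh f hf).2
              have hle : (k:ℝ) * h ≤ t := by
                have hkn : (k:ℝ) ≤ n := Nat.cast_le.mpr hk
                calc (k:ℝ) * h ≤ (n:ℝ) * h :=
                      mul_le_mul_of_nonneg_right hkn hhpos.le
                  _ = t := by rw [hh]; field_simp
              rw [min_eq_right hle] at h2
              exact h2
          have key : ∀ k : ℕ, k ≤ n →
              (k:ℝ) * ((k:ℝ) - 1) * h ^ 2 ≤ ψ (m k * m k) ∧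
                ψ (m k * m k) ≤ (k:ℝ) ^ 2 * h ^ 2 := by
            intro k
            induction k with
            | zero =>
              intro _
              have hz : m 0 * m 0 = (0:ℝ) • f := by
                rw [hm0]; funext x; simp
              rw [hz, hψ_smul 0 f hf]
              norm_num
            | succ k ih =>
              intro hk1
              have hk : k ≤ n := Nat.le_of_succ_le hk1
              obtain ⟨ihl, ihu⟩ := ih hk
              have hcd : (k:ℝ) * h ≤ ((k:ℝ) + 1) * h := by nlinarith
              set d : X → ℝ := m (k + 1) - m k with hd
              have hdA : d ∈ A := hsub _ (hmmem (k + 1)) _ (hmmem k)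
              have hψd : ψ d = h := by
                rw [hd, hψsub _ (hmmem (k + 1)) _ (hmmem k), hψm (k + 1) hk1, hψm k hk]
                push_cast; ring
              have hdx : ∀ x, 0 ≤ d x ∧ d x ≤ h := by
                intro x
                have hb := min_diff_bounds (f x) ((k:ℝ) * h) (((k:ℝ) + 1) * h) hcd
                have hdxe : d x = min (f x) (((k:ℝ) + 1) * h) - min (f x) ((k:ℝ) * h) := by
                  simp only [hd, hm, Pi.sub_apply]
                  push_cast
                  ring_nf
                rw [hdxe]
                exact ⟨hb.1, by linarith [hb.2]⟩
              have hid1 : ∀ x, m k x * d x = ((k:ℝ) * h) * d x := by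
                intro x
                have hdxe : d x = min (f x) (((k:ℝ) + 1) * h) - min (f x) ((k:ℝ) * h) := by
                  simp only [hd, hm, Pi.sub_apply]
                  push_cast
                  ring_nf
                have hmke : m k x = min (f x) ((k:ℝ) * h) := by simp [hm]
                rw [hdxe, hmke]
                exact min_mul_diff (f x) ((k:ℝ) * h) (((k:ℝ) + 1) * h) hcd
              have hmk1 : m (k + 1) = m k + d := by rw [hd]; abel
              have hexp : m (k + 1) * m (k + 1) =
                  m k * m k + ((2 * ((k:ℝ) * h)) • d + d * d) := by
                funext x
                have h1 : m (k + 1) x = m k x + d x := by rw [hmk1]; simp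
                simp only [Pi.mul_apply, Pi.add_apply, Pi.smul_apply, smul_eq_mul]
                rw [h1]
                linear_combination 2 * hid1 x
              have hsdA : (2 * ((k:ℝ) * h)) • d ∈ A := hA_smul _ _ hdA
              have hddA : d * d ∈ A := hA_mul _ hdA _ hdA
              have hψexp : ψ (m (k + 1) * m (k + 1)) =
                  ψ (m k * m k) + (2 * ((k:ℝ) * h) * h + ψ (d * d)) := by
                rw [hexp, hψ_add _ (hA_mul _ (hmmem k) _ (hmmem k)) _ (hA_add _ hsdA _ hddA),
                  hψ_add _ hsdA _ hddA, hψ_smul _ _ hdA, hψd]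
              have hdd0 : 0 ≤ ψ (d * d) := hpos _ hddA
                (by intro x; simp only [Pi.mul_apply, Pi.zero_apply]
                    exact mul_nonneg (hdx x).1 (hdx x).1)
              have hddle : ψ (d * d) ≤ h ^ 2 := by
                have hle : d * d ≤ h • d := by
                  intro x
                  simp only [Pi.mul_apply, Pi.smul_apply, smul_eq_mul]
                  nlinarith [(hdx x).1, (hdx x).2]
                have h5 := hmo _ hddA _ (hA_smul h d hdA) hle
                rw [hψ_smul h d hdA, hψd] at h5
                nlinarith
              constructor
              · rw [hψexp]; push_cast; nlinarith
              · rw [hψexp]; push_cast; nlinarith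
          have hnh : (n:ℝ) * h = t := by rw [hh]; field_simp
          set u : X → ℝ := f - m n with hu
          have huA : u ∈ A := hsub f hf _ (hmmem n)
          have hψu : ψ u = 0 := by
            rw [hu, hψsub f hf _ (hmmem n), hψm n le_rfl, hnh, sub_self]
          have hu0 : (0 : X → ℝ) ≤ u := by
            intro x
            simp only [hu, hm, Pi.sub_apply, Pi.zero_apply]
            have := min_le_left (f x) ((n:ℝ) * h)
            linarith
          have hux : ∀ x, u x = f x - min (f x) t := by
            intro x
            simp only [hu, hm, Pi.sub_apply]
            rw [hnh]
          have hid3 : ∀ x, m n x * u x = t * u x := by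
            intro x
            have hmne : m n x = min (f x) t := by simp [hm, hnh]
            rw [hmne, hux x]
            exact min_mul_sub (f x) t
          have hfmu : f = m n + u := by rw [hu]; abel
          have hexp2 : f * f = m n * m n + ((2 * t) • u + u * u) := by
            funext x
            have h1 : f x = m n x + u x := by rw [hfmu]; simp
            simp only [Pi.mul_apply, Pi.add_apply, Pi.smul_apply, smul_eq_mul]
            rw [h1]
            linear_combination 2 * hid3 x
          have hsuA : (2 * t) • u ∈ A := hA_smul _ _ huA
          have huuA : u * u ∈ A := hA_mul _ huA _ huA
          have hψff : ψ (f * f) = ψ (m n * m n) := by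
            rw [hexp2, hψ_add _ (hA_mul _ (hmmem n) _ (hmmem n)) _ (hA_add _ hsuA _ huuA),
              hψ_add _ hsuA _ huuA, hψ_smul _ _ huA, hψu, hnull u huA hu0 hψu]
            ring
          obtain ⟨kl, ku⟩ := key n le_rfl
          have he1 : (n:ℝ) * ((n:ℝ) - 1) * h ^ 2 = t ^ 2 - t ^ 2 / n := by
            rw [hh]; field_simp
          have he2 : (n:ℝ) ^ 2 * h ^ 2 = t ^ 2 := by
            rw [hh]; field_simp
          constructor
          · rw [hψff, ← he1]; exact kl
          · rw [hψff, ← he2]; exact ku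
        have hub := (main 1 one_pos).2
        have hlb : t ^ 2 ≤ ψ (f * f) := by
          by_contra hcon
          push_neg at hcon
          have hdpos : 0 < t ^ 2 - ψ (f * f) := by linarith
          obtain ⟨n, hn⟩ := exists_nat_gt (t ^ 2 / (t ^ 2 - ψ (f * f)))
          have ht2 : 0 < t ^ 2 / (t ^ 2 - ψ (f * f)) := div_pos (by positivity) hdpos
          have hnpos : 0 < n := by exact_mod_cast Nat.cast_pos.mp (ht2.trans hn)
          have hnR : (0:ℝ) < n := Nat.cast_pos.mpr hnpos
          have hmain := (main n hnpos).1
          rw [div_lt_iff₀ hdpos] at hn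
          have h2 : t ^ 2 / n < t ^ 2 - ψ (f * f) := by
            rw [div_lt_iff₀ hnR]; nlinarith
          linarith
        have hfin : ψ (f * f) = t ^ 2 := le_antisymm hub hlb
        rw [hfin]; ring
    have hmulpos : ∀ f ∈ A, ∀ g ∈ A, 0 ≤ f → 0 ≤ g → ψ (f * g) = ψ f * ψ g := by
      intro f hf g hg h0f h0g
      have hfgA : f + g ∈ A := hA_add f hf g hg
      have h0fg : (0 : X → ℝ) ≤ f + g := by
        intro x
        simp only [Pi.add_apply, Pi.zero_apply]
        have := h0f x; have := h0g x
        simp only [Pi.zero_apply] at *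
        linarith
      have e : (f + g) * (f + g) = f * f + (g * g + (2:ℝ) • (f * g)) := by
        funext x
        simp only [Pi.add_apply, Pi.mul_apply, Pi.smul_apply, smul_eq_mul]
        ring
      have hffA : f * f ∈ A := hA_mul f hf f hf
      have hggA : g * g ∈ A := hA_mul g hg g hg
      have hfgmA : f * g ∈ A := hA_mul f hf g hg
      have hsmA : (2:ℝ) • (f * g) ∈ A := hA_smul 2 _ hfgmA
      have h1 : ψ ((f + g) * (f + g)) = ψ (f * f) + (ψ (g * g) + 2 * ψ (f * g)) := by
        rw [e, hψ_add _ hffA _ (hA_add _ hggA _ hsmA), hψ_add _ hggA _ hsmA,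
          hψ_smul 2 _ hfgmA]
      rw [hsqpos _ hfgA h0fg, hsqpos f hf h0f, hsqpos g hg h0g, hψ_add f hf g hg] at h1
      nlinarith [h1]
    have hmul : ∀ f ∈ A, ∀ g ∈ A, ψ (f * g) = ψ f * ψ g := by
      intro f hf g hg
      set fp : X → ℝ := f ⊔ 0 with hfp
      set fm : X → ℝ := (-f) ⊔ 0 with hfm
      set gp : X → ℝ := g ⊔ 0 with hgp
      set gm : X → ℝ := (-g) ⊔ 0 with hgm
      have hfpA : fp ∈ A := hA_sup f hf 0 hzA
      have hfmA : fm ∈ A := hA_sup _ (hneg f hf) 0 hzA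
      have hgpA : gp ∈ A := hA_sup g hg 0 hzA
      have hgmA : gm ∈ A := hA_sup _ (hneg g hg) 0 hzA
      have hfp0 : (0 : X → ℝ) ≤ fp := by
        intro x
        simp only [hfp, Pi.sup_apply, Pi.zero_apply]
        exact le_max_right _ _
      have hfm0 : (0 : X → ℝ) ≤ fm := by
        intro x
        simp only [hfm, Pi.sup_apply, Pi.zero_apply]
        exact le_max_right _ _
      have hgp0 : (0 : X → ℝ) ≤ gp := by
        intro x
        simp only [hgp, Pi.sup_apply, Pi.zero_apply]
        exact le_max_right _ _
      have hgm0 : (0 : X → ℝ) ≤ gm := by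
        intro x
        simp only [hgm, Pi.sup_apply, Pi.zero_apply]
        exact le_max_right _ _
      have hfd : f = fp - fm := by
        funext x
        simp only [hfp, hfm, Pi.sub_apply, Pi.sup_apply, Pi.zero_apply, Pi.neg_apply]
        rcases le_total (f x) 0 with h | h
        · rw [max_eq_right h, max_eq_left (by linarith)]; ring
        · rw [max_eq_left h, max_eq_right (by linarith)]; ring
      have hgd : g = gp - gm := by
        funext x
        simp only [hgp, hgm, Pi.sub_apply, Pi.sup_apply, Pi.zero_apply, Pi.neg_apply]
        rcases le_total (g x) 0 with h | h
        · rw [max_eq_right h, max_eq_left (by linarith)]; ring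
        · rw [max_eq_left h, max_eq_right (by linarith)]; ring
      have hψf : ψ f = ψ fp - ψ fm := by
        conv_lhs => rw [hfd]
        exact hψsub _ hfpA _ hfmA
      have hψg : ψ g = ψ gp - ψ gm := by
        conv_lhs => rw [hgd]
        exact hψsub _ hgpA _ hgmA
      have hprod : f * g = (fp * gp - fp * gm) - (fm * gp - fm * gm) := by
        rw [hfd, hgd]; ring
      have p1 : fp * gp ∈ A := hA_mul _ hfpA _ hgpA
      have p2 : fp * gm ∈ A := hA_mul _ hfpA _ hgmA
      have p3 : fm * gp ∈ A := hA_mul _ hfmA _ hgpA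
      have p4 : fm * gm ∈ A := hA_mul _ hfmA _ hgmA
      rw [hprod, hψsub _ (hsub _ p1 _ p2) _ (hsub _ p3 _ p4), hψsub _ p1 _ p2,
        hψsub _ p3 _ p4, hmulpos _ hfpA _ hgpA hfp0 hgp0, hmulpos _ hfpA _ hgmA hfp0 hgm0,
        hmulpos _ hfmA _ hgpA hfm0 hgp0, hmulpos _ hfmA _ hgmA hfm0 hgm0, hψf, hψg]
      ring
    exact ⟨hmul, hpos⟩
  · -- backward
    rintro ⟨hmul, hpos⟩ f hf
    have hmo := hmono hpos
    have hgA : f ⊓ 1 ∈ A := hA_trunc f hf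
    have hrA : f - f ⊓ 1 ∈ A := hsub f hf _ hgA
    have hr0 : (0 : X → ℝ) ≤ f - f ⊓ 1 := by
      intro x
      simp only [Pi.sub_apply, Pi.inf_apply, Pi.one_apply, Pi.zero_apply]
      have := min_le_left (f x) 1
      linarith
    have hψr : ψ (f - f ⊓ 1) = ψ f - ψ (f ⊓ 1) := hψsub f hf _ hgA
    have hrg : (f - f ⊓ 1) * (f ⊓ 1) = f - f ⊓ 1 := by
      funext x
      simp only [Pi.mul_apply, Pi.sub_apply, Pi.inf_apply, Pi.one_apply]
      rcases le_total (f x) 1 with h | h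
      · rw [min_eq_left h]; ring
      · rw [min_eq_right h]; ring
    have hgple : ψ (f ⊓ 1) ≤ 1 := by
      set gp : X → ℝ := (f ⊓ 1) ⊔ 0 with hgp
      have hgpA : gp ∈ A := hA_sup _ hgA 0 hzA
      have hgp0 : (0 : X → ℝ) ≤ gp := by
        intro x
        simp only [hgp, Pi.sup_apply, Pi.zero_apply]
        exact le_max_right _ _
      have hgpsq : gp * gp ≤ gp := by
        intro x
        simp only [hgp, Pi.mul_apply, Pi.sup_apply, Pi.zero_apply, Pi.inf_apply,
          Pi.one_apply]
        have h1 : (0:ℝ) ≤ max (min (f x) 1) 0 := le_max_right _ _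
        have h2 : max (min (f x) 1) 0 ≤ 1 := max_le (min_le_right _ _) zero_le_one
        nlinarith
      have h1 : ψ gp * ψ gp ≤ ψ gp := by
        have h5 := hmo _ (hA_mul _ hgpA _ hgpA) _ hgpA hgpsq
        rwa [hmul _ hgpA _ hgpA] at h5
      have h2 : 0 ≤ ψ gp := hpos _ hgpA hgp0
      have h3 : ψ gp ≤ 1 := by nlinarith
      have h4 : ψ (f ⊓ 1) ≤ ψ gp := by
        apply hmo _ hgA _ hgpA
        intro x
        simp only [hgp, Pi.sup_apply]
        exact le_max_left _ _
      linarith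
    have hcases := hmul _ hrA _ hgA
    rw [hrg] at hcases
    have hrpos : 0 ≤ ψ (f - f ⊓ 1) := hpos _ hrA hr0
    have hfactor : ψ (f - f ⊓ 1) * (ψ (f ⊓ 1) - 1) = 0 := by
      linear_combination -hcases
    rcases mul_eq_zero.mp hfactor with h | h
    · have heq : ψ (f ⊓ 1) = ψ f := by
        rw [hψr] at h; linarith
      have hf1 : ψ f ≤ 1 := by linarith [hgple]
      rw [heq, min_eq_left hf1]
    · have hg1 : ψ (f ⊓ 1) = 1 := by linarith
      have hfge : 1 ≤ ψ f := by
        rw [hψr] at hrpos; linarith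
      rw [hg1, min_eq_right hfge]
end

section
/- Let X be a Tychonoff space and L a truncated vector sublattice of C(X). A nonzero linear functional ψ on L is a truncation homomorphism if and only if there exists u ∈ βX (the Stone–Čech compactification) such that ψ(f) = f^β(u) for all f ∈ L, where f^β : βX → ℝ ∪ {∞} is the unique continuous extension of f to the one-point compactification of ℝ; in particular f^β(u) ∈ ℝ for all f ∈ L. -/
open Filter Topology Set

theorem stmt_15 {X : Type*} [TopologicalSpace X] [T35Space X] [Nonempty X]
    (L : Set (X → ℝ))
    (hcont : ∀ f ∈ L, Continuous f)
    (hL_add : ∀ f ∈ L, ∀ g ∈ L, f + g ∈ L)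
    (hL_smul : ∀ (c : ℝ), ∀ f ∈ L, c • f ∈ L)
    (hL_sup : ∀ f ∈ L, ∀ g ∈ L, f ⊔ g ∈ L)
    (hL_inf : ∀ f ∈ L, ∀ g ∈ L, f ⊓ g ∈ L)
    (hL_trunc : ∀ f ∈ L, f ⊓ 1 ∈ L)
    (ψ : (X → ℝ) → ℝ)
    (hψ_add : ∀ f ∈ L, ∀ g ∈ L, ψ (f + g) = ψ f + ψ g)
    (hψ_smul : ∀ (c : ℝ), ∀ f ∈ L, ψ (c • f) = c * ψ f)
    (hψ_ne : ∃ f ∈ L, ψ f ≠ 0) :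
    (∀ f ∈ L, ψ (f ⊓ 1) = min (ψ f) 1) ↔
      ∃ u : StoneCech X, ∀ (f : X → ℝ) (hf : f ∈ L),
        stoneCechExtend (OnePoint.continuous_coe.comp (hcont f hf)) u
          = ((ψ f : ℝ) : OnePoint ℝ) := by
  classical
  obtain ⟨f₀, hf₀L, hf₀⟩ := hψ_ne
  have hL_zero : (0 : X → ℝ) ∈ L := by simpa using hL_smul 0 f₀ hf₀L
  have hψ_zero : ψ 0 = 0 := by simpa using hψ_smul 0 f₀ hf₀L
  have hL_neg : ∀ f ∈ L, -f ∈ L := fun f hf => by simpa using hL_smul (-1) f hf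
  have hψ_neg : ∀ f ∈ L, ψ (-f) = -ψ f := fun f hf => by
    simpa using hψ_smul (-1) f hf
  have hL_sub : ∀ f ∈ L, ∀ g ∈ L, f - g ∈ L := fun f hf g hg => by
    simpa [sub_eq_add_neg] using hL_add f hf (-g) (hL_neg g hg)
  have hψ_sub : ∀ f ∈ L, ∀ g ∈ L, ψ (f - g) = ψ f - ψ g := fun f hf g hg => by
    rw [sub_eq_add_neg, hψ_add f hf (-g) (hL_neg g hg), hψ_neg g hg]; ring
  constructor
  · -- forward direction
    intro htr
    -- truncation at an arbitrary positive level
    have truncL : ∀ c : ℝ, 0 < c → ∀ f ∈ L, (fun x => min (f x) c) ∈ L := by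
      intro c hc f hf
      have h2 : (fun x => min (f x) c) = c • ((c⁻¹ • f) ⊓ 1) := by
        funext x
        simp only [Pi.smul_apply, Pi.inf_apply, Pi.one_apply, smul_eq_mul]
        rw [show (c⁻¹ * f x) ⊓ (1:ℝ) = min (c⁻¹ * f x) 1 from rfl,
          mul_min_of_nonneg _ _ hc.le, mul_inv_cancel_left₀ hc.ne', mul_one]
      rw [h2]
      exact hL_smul c _ (hL_trunc _ (hL_smul c⁻¹ f hf))
    have truncψ : ∀ c : ℝ, 0 < c → ∀ f ∈ L, ψ (fun x => min (f x) c) = min (ψ f) c := by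
      intro c hc f hf
      have h2 : (fun x => min (f x) c) = c • ((c⁻¹ • f) ⊓ 1) := by
        funext x
        simp only [Pi.smul_apply, Pi.inf_apply, Pi.one_apply, smul_eq_mul]
        rw [show (c⁻¹ * f x) ⊓ (1:ℝ) = min (c⁻¹ * f x) 1 from rfl,
          mul_min_of_nonneg _ _ hc.le, mul_inv_cancel_left₀ hc.ne', mul_one]
      rw [h2, hψ_smul c _ (hL_trunc _ (hL_smul c⁻¹ f hf)),
        htr _ (hL_smul c⁻¹ f hf), hψ_smul c⁻¹ f hf,
        mul_min_of_nonneg _ _ hc.le, mul_inv_cancel_left₀ hc.ne', mul_one]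
    -- boundedness
    have hbd : ∀ g ∈ L, ∀ c : ℝ, 0 < c → (∀ x, g x ≤ c) → ψ g ≤ c := by
      intro g hg c hc hgc
      have h1 : (fun x => min (g x) c) = g := funext fun x => min_eq_left (hgc x)
      have := truncψ c hc g hg
      rw [h1] at this
      rw [this]; exact min_le_right _ _
    -- ψ (h ⊓ 0) = min (ψ h) 0
    have inf0 : ∀ h ∈ L, ψ (h ⊓ 0) = min (ψ h) 0 := by
      intro h hh
      have hmem : h ⊓ 0 ∈ L := hL_inf h hh 0 hL_zero
      set z := ψ (h ⊓ 0) with hz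
      have key : ∀ c : ℝ, 0 < c → |min (ψ h) c - z| ≤ c := by
        intro c hc
        set d : X → ℝ := (fun x => min (h x) c) - (h ⊓ 0) with hd
        have hdmem : d ∈ L := hL_sub _ (truncL c hc h hh) _ hmem
        have hψd : ψ d = min (ψ h) c - z := by
          rw [hd, hψ_sub _ (truncL c hc h hh) _ hmem, truncψ c hc h hh]
        have hub : ∀ x, d x ≤ c := by
          intro x
          simp only [hd, Pi.sub_apply, Pi.inf_apply, Pi.zero_apply]
          rcases le_total (h x) 0 with hx | hx
          · rw [min_eq_left (hx.trans hc.le), min_eq_left hx]; linarith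
          · rw [min_eq_right hx]; have := min_le_right (h x) c; linarith
        have hlb : ∀ x, -(d x) ≤ c := by
          intro x
          simp only [hd, Pi.sub_apply, Pi.inf_apply, Pi.zero_apply]
          have : min (h x) 0 ≤ min (h x) c := min_le_min le_rfl hc.le
          linarith
        have h1 : ψ d ≤ c := hbd d hdmem c hc hub
        have h2 : ψ (-d) ≤ c := hbd (-d) (hL_neg d hdmem) c hc (by simpa using hlb)
        rw [hψ_neg d hdmem] at h2
        rw [hψd] at h1 h2
        rw [abs_le]; constructor <;> linarith
      rcases le_or_gt (ψ h) 0 with hψh | hψh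
      · rw [min_eq_left hψh]
        by_contra hne
        have hpos : 0 < |ψ h - z| := abs_pos.mpr (sub_ne_zero.mpr (Ne.symm hne))
        have := key (|ψ h - z| / 2) (by linarith)
        rw [min_eq_left (by linarith [abs_nonneg (ψ h - z)] : ψ h ≤ |ψ h - z| / 2)] at this
        linarith
      · rw [min_eq_right hψh.le]
        have hz0 : 0 ≤ z := by
          have := key (ψ h / 2) (by linarith)
          rw [min_eq_right (by linarith), abs_le] at this
          linarith [this.1, this.2]
        by_contra hne
        have hzpos : 0 < z := lt_of_le_of_ne hz0 (Ne.symm hne)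
        have hcpos : 0 < min (z / 4) (ψ h / 2) := lt_min (by linarith) (by linarith)
        have := key (min (z / 4) (ψ h / 2)) hcpos
        rw [min_eq_right (min_le_of_right_le (by linarith)), abs_le] at this
        have h4 : min (z / 4) (ψ h / 2) ≤ z / 4 := min_le_left _ _
        linarith [this.1]
    -- lattice homomorphism
    have infhom : ∀ f ∈ L, ∀ g ∈ L, ψ (f ⊓ g) = min (ψ f) (ψ g) := by
      intro f hf g hg
      have hId : f ⊓ g = g + ((f - g) ⊓ 0) := by
        funext x
        simp only [Pi.inf_apply, Pi.add_apply, Pi.sub_apply, Pi.zero_apply]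
        rcases le_total (f x) (g x) with hx | hx
        · rw [min_eq_left hx, min_eq_left (by linarith)]; ring
        · rw [min_eq_right hx, min_eq_right (by linarith)]; ring
      have hm : (f - g) ⊓ 0 ∈ L := hL_inf _ (hL_sub f hf g hg) 0 hL_zero
      rw [hId, hψ_add g hg _ hm, inf0 _ (hL_sub f hf g hg), hψ_sub f hf g hg]
      rcases le_total (ψ f) (ψ g) with hx | hx
      · rw [min_eq_left (by linarith), min_eq_left hx]; ring
      · rw [min_eq_right (by linarith), min_eq_right hx]; ring
    have suphom : ∀ f ∈ L, ∀ g ∈ L, ψ (f ⊔ g) = max (ψ f) (ψ g) := by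
      intro f hf g hg
      have hId : f ⊔ g = (f + g) - (f ⊓ g) := by
        funext x
        simp only [Pi.sup_apply, Pi.sub_apply, Pi.add_apply, Pi.inf_apply]
        rcases le_total (f x) (g x) with hx | hx
        · rw [max_eq_right hx, min_eq_left hx]; ring
        · rw [max_eq_left hx, min_eq_right hx]; ring
      rw [hId, hψ_sub _ (hL_add f hf g hg) _ (hL_inf f hf g hg), hψ_add f hf g hg,
        infhom f hf g hg]
      rcases le_total (ψ f) (ψ g) with hx | hx
      · rw [min_eq_left hx, max_eq_right hx]; ring
      · rw [min_eq_right hx, max_eq_left hx]; ring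
    -- the unit e
    set e : X → ℝ := (((ψ f₀)⁻¹ • f₀) ⊔ 0) ⊓ 1 with he
    have hg₀ : (ψ f₀)⁻¹ • f₀ ∈ L := hL_smul _ f₀ hf₀L
    have hψg₀ : ψ ((ψ f₀)⁻¹ • f₀) = 1 := by
      rw [hψ_smul _ f₀ hf₀L, inv_mul_cancel₀ hf₀]
    have hsup₀ : ((ψ f₀)⁻¹ • f₀) ⊔ 0 ∈ L := hL_sup _ hg₀ 0 hL_zero
    have heL : e ∈ L := hL_trunc _ hsup₀
    have hψe : ψ e = 1 := by
      rw [he, htr _ hsup₀, suphom _ hg₀ 0 hL_zero, hψg₀, hψ_zero]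
      norm_num
    have he0 : ∀ x, 0 ≤ e x := by
      intro x
      simp only [he, Pi.inf_apply, Pi.sup_apply, Pi.zero_apply, Pi.one_apply]
      exact le_min (le_max_right _ _) one_pos.le
    have he1 : ∀ x, e x ≤ 1 := fun x => by
      simp only [he, Pi.inf_apply, Pi.one_apply]
      exact min_le_right _ _
    -- the filter
    set I : Set (X → ℝ) := {k | k ∈ L ∧ 1 < ψ k} with hI
    set F : Filter X := ⨅ k : I, 𝓟 {x | 1 < (k : X → ℝ) x} with hF
    have hInonempty : Nonempty I := ⟨⟨(2 : ℝ) • e, hL_smul 2 e heL, by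
      rw [hψ_smul 2 e heL, hψe]; norm_num⟩⟩
    have hdir : Directed (· ≥ ·) (fun k : I => 𝓟 {x | 1 < (k : X → ℝ) x}) := by
      rintro ⟨k, hkL, hk⟩ ⟨k', hk'L, hk'⟩
      refine ⟨⟨k ⊓ k', hL_inf k hkL k' hk'L, ?_⟩, ?_, ?_⟩
      · rw [infhom k hkL k' hk'L]; exact lt_min hk hk'
      · refine principal_mono.mpr fun x hx => ?_
        simp only [mem_setOf_eq, Pi.inf_apply] at hx ⊢
        exact (lt_inf_iff.mp hx).1
      · refine principal_mono.mpr fun x hx => ?_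
        simp only [mem_setOf_eq, Pi.inf_apply] at hx ⊢
        exact (lt_inf_iff.mp hx).2
    have hne : ∀ k : I, ({x | 1 < (k : X → ℝ) x}).Nonempty := by
      rintro ⟨k, hkL, hk⟩
      by_contra hcon
      push_neg at hcon
      simp only [not_nonempty_iff_eq_empty, eq_empty_iff_forall_notMem, mem_setOf_eq,
        not_lt] at hcon
      have hkk : k ⊓ 1 = k := funext fun x => by
        simp only [Pi.inf_apply, Pi.one_apply]
        exact min_eq_left (hcon x)
      have := htr k hkL
      rw [hkk] at this
      rw [this] at hk
      simp only [lt_min_iff] at hk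
      exact absurd hk.2 (lt_irrefl 1)
    haveI hFne : F.NeBot := by
      rw [hF]
      exact iInf_neBot_of_directed hdir fun k => principal_neBot_iff.mpr (hne k)
    have hmemF : ∀ k ∈ L, 1 < ψ k → {x | 1 < k x} ∈ F := by
      intro k hkL hk
      have : F ≤ 𝓟 {x | 1 < k x} := iInf_le (fun k : I => 𝓟 {x | 1 < (k : X → ℝ) x}) ⟨k, hkL, hk⟩
      exact this (mem_principal_self _)
    -- one-sided estimate
    have honeside : ∀ f ∈ L, ∀ ε : ℝ, 0 < ε → {x | ψ f - ε < f x} ∈ F := by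
      intro f hf ε hε
      obtain ⟨a, ha⟩ : ∃ a, a = ψ f := ⟨_, rfl⟩
      obtain ⟨C, hC⟩ : ∃ C, C = |a| + ε := ⟨_, rfl⟩
      obtain ⟨c, hc⟩ : ∃ c, c = a + C - ε / 2 := ⟨_, rfl⟩
      have hcpos : 0 < c := by
        have := abs_nonneg a
        have := neg_abs_le a
        rw [hc, hC]; linarith
      obtain ⟨k, hk⟩ : ∃ k : X → ℝ, k = c⁻¹ • (f + C • e) := ⟨_, rfl⟩
      have hkL : k ∈ L := by
        rw [hk]; exact hL_smul _ _ (hL_add f hf _ (hL_smul C e heL))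
      have hψk : 1 < ψ k := by
        rw [hk, hψ_smul _ _ (hL_add f hf _ (hL_smul C e heL)),
          hψ_add f hf _ (hL_smul C e heL), hψ_smul C e heL, hψe]
        rw [show c⁻¹ * (ψ f + C * 1) = (a + C) / c by rw [ha]; ring]
        rw [lt_div_iff₀ hcpos]
        rw [hc]; linarith
      have hsub : {x | 1 < k x} ⊆ {x | ψ f - ε < f x} := by
        intro x hx
        simp only [hk, Pi.smul_apply, Pi.add_apply, smul_eq_mul, mem_setOf_eq] at hx
        have h1 : c < f x + C * e x := by
          have h2 : c * 1 < c * (c⁻¹ * (f x + C * e x)) := mul_lt_mul_of_pos_left hx hcpos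
          rwa [mul_one, mul_inv_cancel_left₀ hcpos.ne'] at h2
        have hCe : C * e x ≤ C := by
          have hC0 : 0 ≤ C := by rw [hC]; linarith [abs_nonneg a]
          calc C * e x ≤ C * 1 := by
                exact mul_le_mul_of_nonneg_left (he1 x) hC0
            _ = C := mul_one C
        simp only [mem_setOf_eq]
        rw [hc] at h1
        rw [← ha]
        linarith
      exact mem_of_superset (hmemF k hkL hψk) hsub
    -- tendsto
    have htend : ∀ f ∈ L, Tendsto f F (𝓝 (ψ f)) := by
      intro f hf
      rw [Metric.tendsto_nhds]
      intro ε hε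
      have h1 := honeside f hf ε hε
      have h2 := honeside (-f) (hL_neg f hf) ε hε
      rw [hψ_neg f hf] at h2
      filter_upwards [h1, h2] with x hx1 hx2
      simp only [mem_setOf_eq, Pi.neg_apply] at hx1 hx2
      rw [Real.dist_eq, abs_sub_lt_iff]
      constructor <;> linarith
    -- cluster point
    haveI : (Filter.map (stoneCechUnit : X → StoneCech X) F).NeBot := hFne.map _
    obtain ⟨u, hu⟩ := exists_clusterPt_of_compactSpace
      (Filter.map (stoneCechUnit : X → StoneCech X) F)
    refine ⟨u, ?_⟩
    intro f hf
    set fβ := stoneCechExtend (OnePoint.continuous_coe.comp (hcont f hf)) with hfβ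
    have hcl : ClusterPt (fβ u) (Filter.map fβ (Filter.map stoneCechUnit F)) :=
      hu.map (continuous_stoneCechExtend _).continuousAt tendsto_map
    rw [Filter.map_map, stoneCechExtend_extends (OnePoint.continuous_coe.comp (hcont f hf))]
      at hcl
    have ht : Tendsto (((↑) : ℝ → OnePoint ℝ) ∘ f) F (𝓝 ((ψ f : ℝ) : OnePoint ℝ)) :=
      (OnePoint.continuous_coe.tendsto (ψ f)).comp (htend f hf)
    haveI : (Filter.map (((↑) : ℝ → OnePoint ℝ) ∘ f) F).NeBot := hFne.map _
    have : ClusterPt (fβ u) (𝓝 ((ψ f : ℝ) : OnePoint ℝ)) := hcl.mono ht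
    exact eq_of_nhds_neBot this
  · -- backward direction
    rintro ⟨u, hu⟩ f hf
    set F : Filter X := Filter.comap (stoneCechUnit : X → StoneCech X) (𝓝 u) with hF
    haveI hFne : F.NeBot :=
      Filter.comap_neBot fun t ht => denseRange_stoneCechUnit.mem_nhds ht
    have htu : Tendsto (stoneCechUnit : X → StoneCech X) F (𝓝 u) := tendsto_comap
    have hlim : ∀ g, ∀ hg : g ∈ L, Tendsto g F (𝓝 (ψ g)) := by
      intro g hg
      have h1 : Tendsto (stoneCechExtend (OnePoint.continuous_coe.comp (hcont g hg)) ∘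
          stoneCechUnit) F (𝓝 (stoneCechExtend (OnePoint.continuous_coe.comp (hcont g hg)) u)) :=
        ((continuous_stoneCechExtend _).tendsto u).comp htu
      rw [stoneCechExtend_extends (OnePoint.continuous_coe.comp (hcont g hg)), hu g hg] at h1
      exact OnePoint.isOpenEmbedding_coe.tendsto_nhds_iff.mpr h1
    have ht1 := hlim (f ⊓ 1) (hL_trunc f hf)
    have ht2 : Tendsto (f ⊓ 1 : X → ℝ) F (𝓝 (min (ψ f) 1)) := by
      have h := (hlim f hf).min
        (tendsto_const_nhds : Tendsto (fun _ : X => (1:ℝ)) F (𝓝 1))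
      have : (f ⊓ 1 : X → ℝ) = fun x => min (f x) 1 := funext fun x => by
        simp [Pi.inf_apply]
      rw [this]
      exact h
    exact tendsto_nhds_unique ht1 ht2
end

section
/- Let X be a Tychonoff space and L a truncated vector sublattice of C(X) separating points from closed sets. If for every u ∈ βX \ X there exists f ∈ L with f^β(u) = ∞, then X is L-realcompact: every truncation homomorphism on L is evaluation at some point of X. -/
open Set

/-- Truncation by a positive constant, expressed via `⊓ 1`. -/
noncomputable def trC {X : Type*} (c : ℝ) (f : X → ℝ) : X → ℝ := c • ((c⁻¹ • f) ⊓ 1)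

lemma trC_apply {X : Type*} {c : ℝ} (hc : 0 < c) (f : X → ℝ) (x : X) :
    trC c f x = min (f x) c := by
  simp only [trC, Pi.smul_apply, Pi.inf_apply, Pi.one_apply, smul_eq_mul]
  rw [mul_min_of_nonneg _ _ hc.le, mul_one, mul_inv_cancel_left₀ hc.ne']

/-- Bundle of the algebraic hypotheses. -/
structure TD (X : Type*) where
  L : Set (X → ℝ)
  ψ : (X → ℝ) → ℝ
  hadd : ∀ f ∈ L, ∀ g ∈ L, f + g ∈ L
  hsmul : ∀ (c : ℝ), ∀ f ∈ L, c • f ∈ L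
  hsup : ∀ f ∈ L, ∀ g ∈ L, f ⊔ g ∈ L
  hinf : ∀ f ∈ L, ∀ g ∈ L, f ⊓ g ∈ L
  htrunc : ∀ f ∈ L, f ⊓ 1 ∈ L
  pa : ∀ f ∈ L, ∀ g ∈ L, ψ (f + g) = ψ f + ψ g
  ps : ∀ (c : ℝ), ∀ f ∈ L, ψ (c • f) = c * ψ f
  pne : ∃ f ∈ L, ψ f ≠ 0
  pt : ∀ f ∈ L, ψ (f ⊓ 1) = min (ψ f) 1

namespace TD

variable {X : Type*} (T : TD X)

lemma zero_mem : (0 : X → ℝ) ∈ T.L := by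
  obtain ⟨f, hf, -⟩ := T.pne
  simpa using T.hsmul 0 f hf

lemma psi_zero : T.ψ 0 = 0 := by
  obtain ⟨f, hf, -⟩ := T.pne
  simpa using T.ps 0 f hf

lemma neg_mem {f : X → ℝ} (hf : f ∈ T.L) : -f ∈ T.L := by
  simpa [neg_one_smul] using T.hsmul (-1) f hf

lemma psi_neg {f : X → ℝ} (hf : f ∈ T.L) : T.ψ (-f) = -(T.ψ f) := by
  have := T.ps (-1) f hf
  simpa [neg_one_smul] using this

lemma sub_mem {f g : X → ℝ} (hf : f ∈ T.L) (hg : g ∈ T.L) : f - g ∈ T.L := by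
  rw [sub_eq_add_neg]; exact T.hadd f hf _ (T.neg_mem hg)

lemma psi_sub {f g : X → ℝ} (hf : f ∈ T.L) (hg : g ∈ T.L) :
    T.ψ (f - g) = T.ψ f - T.ψ g := by
  rw [sub_eq_add_neg, T.pa f hf _ (T.neg_mem hg), T.psi_neg hg, sub_eq_add_neg]

lemma psi_abs_le {g : X → ℝ} (hg : g ∈ T.L) {ε : ℝ} (hε : 0 < ε)
    (h0 : ∀ x, 0 ≤ g x) (h1 : ∀ x, g x ≤ ε) : |T.ψ g| ≤ ε := by
  have hg'L : ε⁻¹ • g ∈ T.L := T.hsmul _ _ hg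
  have happ : ∀ x, (ε⁻¹ • g) x = ε⁻¹ * g x := fun x => rfl
  have hb : ∀ x, 0 ≤ (ε⁻¹ • g) x ∧ (ε⁻¹ • g) x ≤ 1 := by
    intro x
    rw [happ]
    constructor
    · exact mul_nonneg (by positivity) (h0 x)
    · rw [← inv_mul_cancel₀ hε.ne']
      exact mul_le_mul_of_nonneg_left (h1 x) (by positivity)
  have e1 : (ε⁻¹ • g) ⊓ 1 = ε⁻¹ • g := by
    funext x
    simp only [Pi.inf_apply, Pi.one_apply]
    exact min_eq_left (hb x).2
  have e2 : (-(ε⁻¹ • g)) ⊓ 1 = -(ε⁻¹ • g) := by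
    funext x
    simp only [Pi.inf_apply, Pi.one_apply, Pi.neg_apply]
    exact min_eq_left (by linarith [(hb x).1])
  have u1 : T.ψ (ε⁻¹ • g) ≤ 1 := by
    have := T.pt _ hg'L
    rw [e1] at this
    rw [this]; exact min_le_right _ _
  have u2 : -(T.ψ (ε⁻¹ • g)) ≤ 1 := by
    have := T.pt _ (T.neg_mem hg'L)
    rw [e2] at this
    rw [← T.psi_neg hg'L, this]; exact min_le_right _ _
  have hval : T.ψ (ε⁻¹ • g) = ε⁻¹ * T.ψ g := T.ps _ _ hg
  rw [hval] at u1 u2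
  rw [abs_le]
  constructor <;> nlinarith [inv_pos.2 hε, mul_pos hε (inv_pos.2 hε), inv_mul_cancel₀ hε.ne']

lemma trC_mem {c : ℝ} {f : X → ℝ} (hf : f ∈ T.L) : trC c f ∈ T.L :=
  T.hsmul _ _ (T.htrunc _ (T.hsmul c⁻¹ f hf))

lemma psi_trC {c : ℝ} (hc : 0 < c) {f : X → ℝ} (hf : f ∈ T.L) :
    T.ψ (trC c f) = min (T.ψ f) c := by
  have h1 : c⁻¹ • f ∈ T.L := T.hsmul c⁻¹ f hf
  rw [trC, T.ps _ _ (T.htrunc _ h1), T.pt _ h1, T.ps _ _ hf,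
    mul_min_of_nonneg _ _ hc.le, mul_one, mul_inv_cancel_left₀ hc.ne']

lemma psi_nonneg {f : X → ℝ} (hf : f ∈ T.L) (h : ∀ x, 0 ≤ f x) : 0 ≤ T.ψ f := by
  by_contra h'
  push_neg at h'
  have hε : 0 < -T.ψ f / 2 := by linarith
  have h1 : T.ψ (trC (-T.ψ f / 2) f) = min (T.ψ f) (-T.ψ f / 2) := T.psi_trC hε hf
  have h2 : |T.ψ (trC (-T.ψ f / 2) f)| ≤ -T.ψ f / 2 := by
    refine T.psi_abs_le (T.trC_mem hf) hε (fun x => ?_) (fun x => ?_)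
    · rw [trC_apply hε]; exact le_min (h x) hε.le
    · rw [trC_apply hε]; exact min_le_right _ _
  rw [min_eq_left (by linarith)] at h1
  rw [h1, abs_of_neg h'] at h2
  linarith

lemma psi_mono {f g : X → ℝ} (hf : f ∈ T.L) (hg : g ∈ T.L) (h : ∀ x, f x ≤ g x) :
    T.ψ f ≤ T.ψ g := by
  have h1 : 0 ≤ T.ψ (g - f) :=
    T.psi_nonneg (T.sub_mem hg hf) (fun x => by simp [Pi.sub_apply]; linarith [h x])
  have h2 := T.psi_sub hg hf
  linarith

lemma psi_le_const {f : X → ℝ} (hf : f ∈ T.L) {M : ℝ} (hM : 0 < M)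
    (h : ∀ x, f x ≤ M) : T.ψ f ≤ M := by
  have e : trC M f = f := funext fun x => by rw [trC_apply hM]; exact min_eq_left (h x)
  have := T.psi_trC hM hf
  rw [e] at this
  rw [this]; exact min_le_right _ _

lemma psi_inf_zero {f : X → ℝ} (hf : f ∈ T.L) : T.ψ (f ⊓ 0) = min (T.ψ f) 0 := by
  have hmem : f ⊓ 0 ∈ T.L := T.hinf f hf 0 T.zero_mem
  have key : ∀ ε : ℝ, 0 < ε → |T.ψ (f ⊓ 0) - min (T.ψ f) 0| ≤ 2 * ε := by
    intro ε hε
    have hdmem : trC ε f - f ⊓ 0 ∈ T.L := T.sub_mem (T.trC_mem hf) hmem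
    have habs : |T.ψ (trC ε f - f ⊓ 0)| ≤ ε := by
      refine T.psi_abs_le hdmem hε (fun x => ?_) (fun x => ?_)
      · simp only [Pi.sub_apply, Pi.inf_apply, Pi.zero_apply, trC_apply hε]
        have := min_le_min (le_refl (f x)) hε.le
        linarith
      · simp only [Pi.sub_apply, Pi.inf_apply, Pi.zero_apply, trC_apply hε]
        rcases le_total (f x) 0 with h | h
        · rw [min_eq_left (by linarith), min_eq_left h]; linarith
        · rw [min_eq_right h]
          have := min_le_right (f x) ε
          linarith
    have heq : T.ψ (trC ε f - f ⊓ 0) = min (T.ψ f) ε - T.ψ (f ⊓ 0) := by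
      rw [T.psi_sub (T.trC_mem hf) hmem, T.psi_trC hε hf]
    have hm1 : min (T.ψ f) 0 ≤ min (T.ψ f) ε := min_le_min le_rfl hε.le
    have hm2 : min (T.ψ f) ε ≤ min (T.ψ f) 0 + ε := by
      rcases le_total (T.ψ f) 0 with h | h
      · rw [min_eq_left h, min_eq_left (by linarith)]; linarith
      · rw [min_eq_right h]
        have := min_le_right (T.ψ f) ε
        linarith
    rw [heq, abs_le] at habs
    rw [abs_le]
    constructor <;> linarith [habs.1, habs.2]
  by_contra hne
  have h3 : 0 < |T.ψ (f ⊓ 0) - min (T.ψ f) 0| := abs_pos.2 (sub_ne_zero.2 hne)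
  have := key (|T.ψ (f ⊓ 0) - min (T.ψ f) 0| / 4) (by linarith)
  linarith

lemma psi_inf {f g : X → ℝ} (hf : f ∈ T.L) (hg : g ∈ T.L) :
    T.ψ (f ⊓ g) = min (T.ψ f) (T.ψ g) := by
  have e : f ⊓ g = g + ((f - g) ⊓ 0) := by
    funext x
    simp only [Pi.inf_apply, Pi.add_apply, Pi.sub_apply, Pi.zero_apply]
    rcases le_total (f x) (g x) with h | h
    · rw [min_eq_left h, min_eq_left (by linarith)]; ring
    · rw [min_eq_right h, min_eq_right (by linarith)]; ring
  rw [e, T.pa g hg _ (T.hinf _ (T.sub_mem hf hg) 0 T.zero_mem),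
    T.psi_inf_zero (T.sub_mem hf hg), T.psi_sub hf hg]
  rcases le_total (T.ψ f) (T.ψ g) with h | h
  · rw [min_eq_left h, min_eq_left (by linarith)]; ring
  · rw [min_eq_right h, min_eq_right (by linarith)]; ring

lemma psi_sup {f g : X → ℝ} (hf : f ∈ T.L) (hg : g ∈ T.L) :
    T.ψ (f ⊔ g) = max (T.ψ f) (T.ψ g) := by
  have e : f ⊔ g = -((-f) ⊓ (-g)) := by
    funext x
    simp only [Pi.sup_apply, Pi.neg_apply, Pi.inf_apply]
    rw [min_neg_neg, neg_neg]
  rw [e, T.psi_neg (T.hinf _ (T.neg_mem hf) _ (T.neg_mem hg)),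
    T.psi_inf (T.neg_mem hf) (T.neg_mem hg), T.psi_neg hf, T.psi_neg hg,
    min_neg_neg, neg_neg]

end TD
namespace TD

variable {X : Type*} (T : TD X)

lemma exists_e : ∃ e ∈ T.L, (∀ x, 0 ≤ e x) ∧ (∀ x, e x ≤ 1) ∧ T.ψ e = 1 := by
  obtain ⟨f, hf, hne⟩ := T.pne
  set g : X → ℝ := (2 / T.ψ f) • f with hgdef
  have hgL : g ∈ T.L := T.hsmul _ _ hf
  have hgψ : T.ψ g = 2 := by
    rw [hgdef, T.ps _ _ hf, div_mul_cancel₀ _ hne]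
  have hg'L : g ⊔ 0 ∈ T.L := T.hsup _ hgL _ T.zero_mem
  have hg'ψ : T.ψ (g ⊔ 0) = 2 := by
    rw [T.psi_sup hgL T.zero_mem, T.psi_zero, hgψ]
    exact max_eq_left (by norm_num)
  refine ⟨(g ⊔ 0) ⊓ 1, T.htrunc _ hg'L, fun x => ?_, fun x => ?_, ?_⟩
  · simp only [Pi.inf_apply, Pi.sup_apply, Pi.one_apply, Pi.zero_apply]
    exact le_min (le_max_right _ _) zero_le_one
  · simp only [Pi.inf_apply, Pi.one_apply]
    exact min_le_right _ _
  · rw [T.pt _ hg'L, hg'ψ]; norm_num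

lemma sup_family {ι : Type*} (t : Finset ι) (h : ι → X → ℝ) :
    (∀ i ∈ t, h i ∈ T.L) → (∀ i ∈ t, T.ψ (h i) = 0) →
    ∃ H ∈ T.L, (∀ x, 0 ≤ H x) ∧ T.ψ H = 0 ∧ ∀ i ∈ t, ∀ x, h i x ≤ H x := by
  classical
  induction t using Finset.induction_on with
  | empty =>
    intro _ _
    exact ⟨0, T.zero_mem, fun x => le_rfl, T.psi_zero, by simp⟩
  | @insert a s ha ih =>
    intro hm hψ
    obtain ⟨H, hHL, hH0, hHψ, hHle⟩ :=
      ih (fun i hi => hm i (Finset.mem_insert_of_mem hi))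
        (fun i hi => hψ i (Finset.mem_insert_of_mem hi))
    have haL : h a ∈ T.L := hm a (Finset.mem_insert_self a s)
    refine ⟨H ⊔ h a, T.hsup _ hHL _ haL, fun x => ?_, ?_, ?_⟩
    · exact le_trans (hH0 x) (le_sup_left : H x ≤ (H ⊔ h a) x)
    · rw [T.psi_sup hHL haL, hHψ, hψ a (Finset.mem_insert_self a s)]; simp
    · intro i hi x
      rcases Finset.mem_insert.1 hi with rfl | hi
      · exact le_sup_right
      · exact le_trans (hHle i hi x) le_sup_left

lemma inf_family {ι : Type*} (t : Finset ι) (v : ι → X → ℝ) {δ : ℝ} (hδ : 0 < δ) :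
    (∀ i ∈ t, v i ∈ T.L) → (∀ i ∈ t, T.ψ (v i) = δ) → (∀ i ∈ t, ∀ x, v i x ≤ δ) →
    ∃ V ∈ T.L, (∀ x, V x ≤ δ) ∧ T.ψ V = δ ∧ ∀ i ∈ t, ∀ x, V x ≤ v i x := by
  classical
  obtain ⟨e, heL, he0, he1, heψ⟩ := T.exists_e
  induction t using Finset.induction_on with
  | empty =>
    intro _ _ _
    refine ⟨δ • e, T.hsmul _ _ heL, fun x => ?_, ?_, by simp⟩
    · have : (δ • e) x = δ * e x := rfl
      rw [this]
      nlinarith [he1 x, he0 x]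
    · rw [T.ps _ _ heL, heψ, mul_one]
  | @insert a s ha ih =>
    intro hm hψ hb
    obtain ⟨V, hVL, hVb, hVψ, hVle⟩ :=
      ih (fun i hi => hm i (Finset.mem_insert_of_mem hi))
        (fun i hi => hψ i (Finset.mem_insert_of_mem hi))
        (fun i hi => hb i (Finset.mem_insert_of_mem hi))
    have haL : v a ∈ T.L := hm a (Finset.mem_insert_self a s)
    refine ⟨V ⊓ v a, T.hinf _ hVL _ haL, fun x => ?_, ?_, ?_⟩
    · exact le_trans (inf_le_left : (V ⊓ v a) x ≤ V x) (hVb x)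
    · rw [T.psi_inf hVL haL, hVψ, hψ a (Finset.mem_insert_self a s)]; simp
    · intro i hi x
      rcases Finset.mem_insert.1 hi with rfl | hi
      · exact inf_le_right
      · exact le_trans inf_le_left (hVle i hi x)

lemma finite_approx {ι : Type*} (t : Finset ι) (G : ι → X → ℝ)
    (hmem : ∀ i ∈ t, G i ∈ T.L) (hpos : ∀ i ∈ t, ∀ x, 0 ≤ G i x)
    {δ : ℝ} (hδ : 0 < δ) :
    ∃ x, ∀ i ∈ t, |G i x - T.ψ (G i)| ≤ 2 * δ := by
  classical
  obtain ⟨e, heL, he0, he1, heψ⟩ := T.exists_e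
  set b : ι → ℝ := fun i => T.ψ (G i) with hbdef
  have hbpos : ∀ i ∈ t, 0 ≤ b i := fun i hi => T.psi_nonneg (hmem i hi) (hpos i hi)
  -- upper functions
  set h : ι → X → ℝ := fun i => G i - trC (b i + δ) (G i) with hhdef
  have hhL : ∀ i ∈ t, h i ∈ T.L := fun i hi => T.sub_mem (hmem i hi) (T.trC_mem (hmem i hi))
  have hhψ : ∀ i ∈ t, T.ψ (h i) = 0 := by
    intro i hi
    have hc : 0 < b i + δ := by have := hbpos i hi; linarith
    rw [hhdef]
    simp only
    rw [T.psi_sub (hmem i hi) (T.trC_mem (hmem i hi)), T.psi_trC hc (hmem i hi),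
      min_eq_left (by have := hbpos i hi; linarith)]
    ring
  -- lower functions
  set v : ι → X → ℝ := fun i =>
    if b i ≤ δ then δ • e else trC (b i) (G i) - trC (b i - δ) (G i) with hvdef
  have hvL : ∀ i ∈ t, v i ∈ T.L := by
    intro i hi
    rw [hvdef]; simp only
    split
    · exact T.hsmul _ _ heL
    · exact T.sub_mem (T.trC_mem (hmem i hi)) (T.trC_mem (hmem i hi))
  have hvψ : ∀ i ∈ t, T.ψ (v i) = δ := by
    intro i hi
    rw [hvdef]; simp only
    split
    · rw [T.ps _ _ heL, heψ, mul_one]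
    · next hgt =>
      push_neg at hgt
      have h1 : 0 < b i := lt_trans hδ hgt
      have h2 : 0 < b i - δ := by linarith
      rw [T.psi_sub (T.trC_mem (hmem i hi)) (T.trC_mem (hmem i hi)),
        T.psi_trC h1 (hmem i hi), T.psi_trC h2 (hmem i hi),
        min_eq_right le_rfl, min_eq_right (by linarith)]
      ring
  have hvb : ∀ i ∈ t, ∀ x, v i x ≤ δ := by
    intro i hi x
    rw [hvdef]; simp only
    split
    · have : (δ • e) x = δ * e x := rfl
      rw [this]; nlinarith [he0 x, he1 x]
    · next hgt =>
      push_neg at hgt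
      have h1 : 0 < b i := lt_trans hδ hgt
      have h2 : 0 < b i - δ := by linarith
      simp only [Pi.sub_apply, trC_apply h1, trC_apply h2]
      rcases le_total (G i x) (b i - δ) with hc | hc
      · rw [min_eq_left (by linarith), min_eq_left hc]; linarith
      · rw [min_eq_right hc]
        have := min_le_right (G i x) (b i)
        have := min_le_min (le_refl (G i x)) (sub_le_self (b i) hδ.le)
        linarith [min_le_right (G i x) (b i)]
  obtain ⟨H, hHL, hH0, hHψ, hHle⟩ := T.sup_family t h hhL hhψ
  obtain ⟨V, hVL, hVb, hVψ, hVle⟩ := T.inf_family t v hδ hvL hvψ hvb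
  -- the witness
  have hwL : V - H ∈ T.L := T.sub_mem hVL hHL
  have hwψ : T.ψ (V - H) = δ := by rw [T.psi_sub hVL hHL, hVψ, hHψ]; ring
  have hx : ∃ x, δ / 2 < (V - H) x := by
    by_contra hc
    push_neg at hc
    have := T.psi_le_const hwL (by linarith : (0:ℝ) < δ / 2) hc
    rw [hwψ] at this; linarith
  obtain ⟨x, hx⟩ := hx
  have hwx : V x - H x = (V - H) x := rfl
  have hVx : δ / 2 < V x := by have := hH0 x; rw [← hwx] at hx; linarith
  have hHx : H x < δ / 2 := by have := hVb x; rw [← hwx] at hx; linarith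
  refine ⟨x, fun i hi => ?_⟩
  have hupper : G i x < b i + 2 * δ := by
    have h1 : h i x ≤ H x := hHle i hi x
    have hc : 0 < b i + δ := by have := hbpos i hi; linarith
    have h2 : h i x = G i x - min (G i x) (b i + δ) := by
      rw [hhdef]; simp only [Pi.sub_apply, trC_apply hc]
    rw [h2] at h1
    have := min_le_right (G i x) (b i + δ)
    rcases le_total (G i x) (b i + δ) with hc2 | hc2
    · linarith
    · rw [min_eq_right hc2] at h1; linarith
  have hlower : b i - 2 * δ < G i x := by
    rcases le_or_gt (b i) δ with hc | hc
    · have := hpos i hi x; linarith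
    · have h1 : V x ≤ v i x := hVle i hi x
      have h2 : v i x = min (G i x) (b i) - min (G i x) (b i - δ) := by
        rw [hvdef]; simp only
        rw [if_neg (not_le.2 hc)]
        simp only [Pi.sub_apply, trC_apply (lt_trans hδ hc), trC_apply (by linarith : (0:ℝ) < b i - δ)]
      have h3 : 0 < v i x := lt_of_lt_of_le (by linarith : (0:ℝ) < V x) h1
      rw [h2] at h3
      by_contra hc2
      push_neg at hc2
      have : G i x ≤ b i - δ := by linarith
      rw [min_eq_left (by linarith), min_eq_left this] at h3
      linarith
  rw [abs_le]
  constructor <;> linarith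

end TD
theorem stmt_17 {X : Type*} [TopologicalSpace X] [T35Space X] [Nonempty X]
    (L : Set (X → ℝ))
    (hcont : ∀ f ∈ L, Continuous f)
    (hL_add : ∀ f ∈ L, ∀ g ∈ L, f + g ∈ L)
    (hL_smul : ∀ (c : ℝ), ∀ f ∈ L, c • f ∈ L)
    (hL_sup : ∀ f ∈ L, ∀ g ∈ L, f ⊔ g ∈ L)
    (hL_inf : ∀ f ∈ L, ∀ g ∈ L, f ⊓ g ∈ L)
    (hL_trunc : ∀ f ∈ L, f ⊓ 1 ∈ L)
    (hsep : ∀ F : Set X, IsClosed F → ∀ p ∉ F, ∃ f ∈ L, f p ∉ closure (f '' F))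
    (hinfty : ∀ u : StoneCech X, u ∉ Set.range (stoneCechUnit : X → StoneCech X) →
      ∃ (f : X → ℝ) (hf : f ∈ L),
        stoneCechExtend (OnePoint.continuous_coe.comp (hcont f hf)) u = OnePoint.infty) :
    ∀ ψ : (X → ℝ) → ℝ,
      (∀ f ∈ L, ∀ g ∈ L, ψ (f + g) = ψ f + ψ g) →
      (∀ (c : ℝ), ∀ f ∈ L, ψ (c • f) = c * ψ f) →
      (∃ f ∈ L, ψ f ≠ 0) →
      (∀ f ∈ L, ψ (f ⊓ 1) = min (ψ f) 1) →
      ∃ p : X, ∀ f ∈ L, ψ f = f p := by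
  intro ψ hψa hψs hψne hψt
  classical
  let T : TD X := ⟨L, ψ, hL_add, hL_smul, hL_sup, hL_inf, hL_trunc, hψa, hψs, hψne, hψt⟩
  have hTψ : T.ψ = ψ := rfl
  have hTL : T.L = L := rfl
  -- the family of closed sets in βX
  let σ := {p : (X → ℝ) × ℝ // p.1 ∈ L ∧ 0 < p.2}
  let C : σ → Set X := fun s => {x | |s.1.1 x - ψ s.1.1| ≤ s.1.2}
  let Z : σ → Set (StoneCech X) := fun s => closure (stoneCechUnit '' C s)
  -- finite intersection property
  have FIP : ∀ t : Finset σ, ((Set.univ : Set (StoneCech X)) ∩ ⋂ i ∈ t, Z i).Nonempty := by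
    intro t
    rcases t.eq_empty_or_nonempty with rfl | ht
    · exact ⟨stoneCechUnit (Classical.arbitrary X), trivial, by simp⟩
    have hexists : ∃ x : X, ∀ s ∈ t, x ∈ C s := by
      set εm := t.inf' ht (fun s => s.1.2) with hεm_def
      have hεm : 0 < εm := by
        rw [hεm_def, Finset.lt_inf'_iff]
        exact fun s _ => s.2.2
      have hδ : 0 < εm / 8 := by linarith
      set G : σ ⊕ σ → X → ℝ :=
        Sum.elim (fun s => s.1.1 ⊔ 0) (fun s => (-s.1.1) ⊔ 0) with hGdef
      have hGmem : ∀ j ∈ t.disjSum t, G j ∈ T.L := by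
        rintro (s | s) hj
        · exact T.hsup _ (by rw [hTL]; exact s.2.1) _ T.zero_mem
        · exact T.hsup _ (T.neg_mem (by rw [hTL]; exact s.2.1)) _ T.zero_mem
      have hGpos : ∀ j ∈ t.disjSum t, ∀ x, 0 ≤ G j x := by
        rintro (s | s) hj x
        · exact le_sup_right
        · exact le_sup_right
      obtain ⟨x, hx⟩ := T.finite_approx (t.disjSum t) G hGmem hGpos hδ
      refine ⟨x, fun s hs => ?_⟩
      have A1 := hx (Sum.inl s) (Finset.inl_mem_disjSum.2 hs)
      have A2 := hx (Sum.inr s) (Finset.inr_mem_disjSum.2 hs)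
      have hsL : s.1.1 ∈ T.L := by rw [hTL]; exact s.2.1
      have e1 : T.ψ (G (Sum.inl s)) = max (ψ s.1.1) 0 := by
        show T.ψ (s.1.1 ⊔ 0) = _
        rw [T.psi_sup hsL T.zero_mem, T.psi_zero, hTψ]
      have e2 : T.ψ (G (Sum.inr s)) = max (-ψ s.1.1) 0 := by
        show T.ψ ((-s.1.1) ⊔ 0) = _
        rw [T.psi_sup (T.neg_mem hsL) T.zero_mem, T.psi_zero, T.psi_neg hsL, hTψ]
      have v1 : G (Sum.inl s) x = max (s.1.1 x) 0 := rfl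
      have v2 : G (Sum.inr s) x = max (-(s.1.1 x)) 0 := rfl
      rw [e1, v1] at A1
      rw [e2, v2] at A2
      have hsplit : ∀ a : ℝ, max a 0 - max (-a) 0 = a := by
        intro a
        rcases le_total a 0 with h | h
        · rw [max_eq_right h, max_eq_left (by linarith)]; ring
        · rw [max_eq_left h, max_eq_right (by linarith)]; ring
      have hfx := hsplit (s.1.1 x)
      have hψf := hsplit (ψ s.1.1)
      have hle : εm ≤ s.1.2 := Finset.inf'_le _ hs
      show |s.1.1 x - ψ s.1.1| ≤ s.1.2
      rw [abs_le] at A1 A2 ⊢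
      constructor <;> linarith [A1.1, A1.2, A2.1, A2.2]
    obtain ⟨x, hx⟩ := hexists
    refine ⟨stoneCechUnit x, trivial, ?_⟩
    rw [Set.mem_iInter₂]
    exact fun s hs => subset_closure (Set.mem_image_of_mem _ (hx s hs))
  obtain ⟨u, -, hu⟩ :=
    (isCompact_univ : IsCompact (Set.univ : Set (StoneCech X))).inter_iInter_nonempty Z
      (fun i => isClosed_closure) FIP
  have hu2 : ∀ i, u ∈ Z i := Set.mem_iInter.1 hu
  -- u belongs to the image of X
  have hball : ∀ (f : X → ℝ) (hf : f ∈ L) (ε : ℝ) (hε : 0 < ε),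
      (∀ i, u ∈ Z i) →
      stoneCechExtend (OnePoint.continuous_coe.comp (hcont f hf)) u ∈
        (fun r : ℝ => (r : OnePoint ℝ)) '' Metric.closedBall (ψ f) ε := by
    intro f hf ε hε hu2
    set φ := stoneCechExtend (OnePoint.continuous_coe.comp (hcont f hf)) with hφ
    have h1 : u ∈ Z ⟨(f, ε), hf, hε⟩ := hu2 _
    have h2 : φ u ∈ closure (φ '' (stoneCechUnit '' C ⟨(f, ε), hf, hε⟩)) :=
      image_closure_subset_closure_image (continuous_stoneCechExtend _) ⟨u, h1, rfl⟩
    have hsub : φ '' (stoneCechUnit '' C ⟨(f, ε), hf, hε⟩) ⊆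
        (fun r : ℝ => (r : OnePoint ℝ)) '' Metric.closedBall (ψ f) ε := by
      rintro _ ⟨_, ⟨x, hxC, rfl⟩, rfl⟩
      refine ⟨f x, ?_, ?_⟩
      · rw [Metric.mem_closedBall, Real.dist_eq]
        exact hxC
      · have := congrFun (stoneCechExtend_extends (OnePoint.continuous_coe.comp (hcont f hf))) x
        simp only [Function.comp_apply] at this
        exact this.symm
    have hclosed : IsClosed ((fun r : ℝ => (r : OnePoint ℝ)) '' Metric.closedBall (ψ f) ε) :=
      ((isCompact_closedBall _ _).image OnePoint.continuous_coe).isClosed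
    exact closure_minimal hsub hclosed h2
  have hrange : u ∈ Set.range (stoneCechUnit : X → StoneCech X) := by
    by_contra hur
    obtain ⟨f, hf, hfu⟩ := hinfty u hur
    obtain ⟨r, -, hr⟩ := hball f hf 1 one_pos hu2
    rw [hfu] at hr
    exact OnePoint.coe_ne_infty r hr
  obtain ⟨p, rfl⟩ := hrange
  refine ⟨p, fun f hf => ?_⟩
  have key : ∀ ε : ℝ, 0 < ε → |f p - ψ f| ≤ ε := by
    intro ε hε
    obtain ⟨r, hr1, hr2⟩ := hball f hf ε hε hu2
    have hev : stoneCechExtend (OnePoint.continuous_coe.comp (hcont f hf)) (stoneCechUnit p)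
        = ((f p : ℝ) : OnePoint ℝ) := by
      have := congrFun (stoneCechExtend_extends (OnePoint.continuous_coe.comp (hcont f hf))) p
      simpa only [Function.comp_apply] using this
    rw [hev] at hr2
    have hrfp : r = f p := OnePoint.coe_injective hr2
    rw [Metric.mem_closedBall, Real.dist_eq, hrfp] at hr1
    exact hr1
  by_contra hne
  have habs : 0 < |f p - ψ f| := by
    rw [abs_pos, sub_ne_zero]
    exact fun h => hne h.symm
  have := key (|f p - ψ f| / 2) (by linarith)
  linarith
end

section
/- Let X be a closed subset of a product space ℝ^I (with the product topology) and let L be a truncated vector sublattice of C(X) containing the restriction to X of every coordinate projection π_i : ℝ^I → ℝ. Then X is L-realcompact: every truncation homomorphism on L is evaluation at a point of X. -/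
set_option linter.unusedSectionVars false
set_option linter.unusedVariables false

namespace Stmt18Aux

/-- Real arithmetic helpers -/
lemma raux1 (a c : ℝ) (hc : c < 0) : max a 0 - min (max a 0) (-c) = max (a + c) 0 := by
  simp only [max_def, min_def]; split_ifs <;> linarith

lemma raux2 (a c : ℝ) (hc : 0 < c) : -(min (-a) c) + c = max (a + c) 0 := by
  simp only [max_def, min_def]; split_ifs <;> linarith

lemma raux3 (a b : ℝ) : a + max (b - a) 0 = max a b := by
  simp only [max_def]; split_ifs <;> linarith

lemma raux5 (b : ℝ) : min b 1 = min (max b 0) 1 + min b 0 := by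
  simp only [max_def, min_def]; split_ifs <;> linarith

lemma raux6 (a : ℝ) : max a 0 = a + max (-a) 0 := by
  simp only [max_def]; split_ifs <;> linarith

lemma rscale (a c : ℝ) (hc : 0 < c) : c * min (c⁻¹ * a) 1 = min a c := by
  rw [mul_min_of_nonneg _ _ hc.le, mul_one, ← mul_assoc, mul_inv_cancel₀ hc.ne', one_mul]

variable {Y : Type*}

structure Good (L : Set (Y → ℝ)) (ψ : (Y → ℝ) → ℝ) : Prop where
  addMem : ∀ f ∈ L, ∀ g ∈ L, f + g ∈ L
  smulMem : ∀ (c : ℝ), ∀ f ∈ L, c • f ∈ L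
  supMem : ∀ f ∈ L, ∀ g ∈ L, f ⊔ g ∈ L
  infMem : ∀ f ∈ L, ∀ g ∈ L, f ⊓ g ∈ L
  truncMem : ∀ f ∈ L, f ⊓ 1 ∈ L
  ψadd : ∀ f ∈ L, ∀ g ∈ L, ψ (f + g) = ψ f + ψ g
  ψsmul : ∀ (c : ℝ), ∀ f ∈ L, ψ (c • f) = c * ψ f
  ψtrunc : ∀ f ∈ L, ψ (f ⊓ 1) = min (ψ f) 1
  nontriv : ∃ f ∈ L, ψ f ≠ 0

namespace Good

variable {L : Set (Y → ℝ)} {ψ : (Y → ℝ) → ℝ} (h : Good L ψ)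
include h

lemma zero_mem : (0 : Y → ℝ) ∈ L := by
  obtain ⟨f, hf, -⟩ := h.nontriv
  simpa using h.smulMem 0 f hf

lemma ψ_zero : ψ 0 = 0 := by
  obtain ⟨f, hf, -⟩ := h.nontriv
  simpa using h.ψsmul 0 f hf

lemma neg_mem {f : Y → ℝ} (hf : f ∈ L) : -f ∈ L := by
  simpa using h.smulMem (-1) f hf

lemma ψ_neg {f : Y → ℝ} (hf : f ∈ L) : ψ (-f) = -ψ f := by
  have := h.ψsmul (-1) f hf; simpa using this

lemma tcEq (f : Y → ℝ) {c : ℝ} (hc : 0 < c) :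
    c • ((c⁻¹ • f) ⊓ 1) = fun y => min (f y) c := by
  funext y
  show c * min (c⁻¹ * f y) 1 = min (f y) c
  exact rscale _ _ hc

lemma tc_mem {f : Y → ℝ} (hf : f ∈ L) {c : ℝ} (hc : 0 < c) :
    (fun y => min (f y) c) ∈ L := by
  rw [← h.tcEq f hc]
  exact h.smulMem c _ (h.truncMem _ (h.smulMem c⁻¹ f hf))

lemma tc_val {f : Y → ℝ} (hf : f ∈ L) {c : ℝ} (hc : 0 < c) :
    ψ (fun y => min (f y) c) = min (ψ f) c := by
  rw [← h.tcEq f hc, h.ψsmul c _ (h.truncMem _ (h.smulMem c⁻¹ f hf)),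
    h.ψtrunc _ (h.smulMem c⁻¹ f hf), h.ψsmul c⁻¹ f hf]
  exact rscale _ _ hc

lemma ψ_pos {f : Y → ℝ} (hf : f ∈ L) (hpos : ∀ y, 0 ≤ f y) : 0 ≤ ψ f := by
  by_contra hlt
  push_neg at hlt
  set lam : ℝ := 2 / (-ψ f) with hlam
  have hlam0 : 0 < lam := div_pos two_pos (by linarith)
  set g : Y → ℝ := (-lam) • f with hg
  have hgL : g ∈ L := h.smulMem _ f hf
  have hψg : ψ g = 2 := by
    rw [hg, h.ψsmul _ f hf]
    calc (-lam) * ψ f = 2 / (-ψ f) * (-ψ f) := by rw [hlam]; ring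
    _ = 2 := div_mul_cancel₀ _ (by linarith)
  have hgeq : g ⊓ 1 = g := by
    funext y
    show min (g y) 1 = g y
    apply min_eq_left
    have : g y = -lam * f y := rfl
    nlinarith [hpos y, hlam0]
  have := h.ψtrunc g hgL
  rw [hgeq, hψg] at this
  norm_num at this

lemma sub_mem {f g : Y → ℝ} (hf : f ∈ L) (hg : g ∈ L) : f - g ∈ L := by
  rw [sub_eq_add_neg]; exact h.addMem f hf _ (h.neg_mem hg)

lemma ψ_sub {f g : Y → ℝ} (hf : f ∈ L) (hg : g ∈ L) : ψ (f - g) = ψ f - ψ g := by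
  rw [sub_eq_add_neg, h.ψadd f hf _ (h.neg_mem hg), h.ψ_neg hg]; ring

lemma mono {f g : Y → ℝ} (hf : f ∈ L) (hg : g ∈ L) (hle : ∀ y, f y ≤ g y) :
    ψ f ≤ ψ g := by
  have hpos := h.ψ_pos (h.sub_mem hg hf) (fun y => by
    show 0 ≤ g y - f y
    have := hle y; linarith)
  rw [h.ψ_sub hg hf] at hpos
  linarith

lemma kill {t : ℝ} (ht : 0 < t) (hm : (fun _ : Y => t) ∈ L)
    (hv : ψ (fun _ : Y => t) = 0) : False := by
  obtain ⟨f, hf, hfne⟩ := h.nontriv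
  have key : ∀ f' ∈ L, ψ f' ≤ 0 := by
    intro f' hf'
    set c : ℝ := max (ψ f') 0 + 1 with hc
    have hc0 : 0 < c := by positivity
    have hconst : (c / t) • (fun _ : Y => t) = (fun _ : Y => c) := by
      funext y; show (c / t) * t = c; field_simp
    have hcm : (fun _ : Y => c) ∈ L := hconst ▸ h.smulMem (c / t) _ hm
    have hcv : ψ (fun _ : Y => c) = 0 := by
      rw [← hconst, h.ψsmul _ _ hm, hv, mul_zero]
    have h1 : ψ (fun y => min (f' y) c) ≤ ψ (fun _ : Y => c) :=
      h.mono (h.tc_mem hf' hc0) hcm (fun y => min_le_right _ _)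
    rw [h.tc_val hf' hc0, hcv] at h1
    have h2 : ψ f' ≤ c - 1 := le_trans (le_max_left _ _) (by linarith [hc.ge])
    rcases le_or_gt (ψ f') 0 with h3 | h3
    · exact h3
    · exfalso
      have : min (ψ f') c = ψ f' := min_eq_left (by linarith)
      rw [this] at h1; linarith
  have h1 := key f hf
  have h2 := key (-f) (h.neg_mem hf)
  rw [h.ψ_neg hf] at h2
  exact hfne (le_antisymm h1 (by linarith))

lemma const_val {t : ℝ} (ht : 0 < t) (hm : (fun _ : Y => t) ∈ L) :
    ψ (fun _ : Y => t) = t := by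
  set v := ψ (fun _ : Y => t) with hv
  have ht2 : (0:ℝ) < t / 2 := by linarith
  have e1 : (fun y : Y => min ((fun _ : Y => t) y) (t / 2)) = (fun _ : Y => t / 2) := by
    funext y; exact min_eq_right (by linarith)
  have e2 : (fun _ : Y => t / 2) = (1 / 2 : ℝ) • (fun _ : Y => t) := by
    funext y; show t / 2 = (1 / 2 : ℝ) * t; ring
  have h1 := h.tc_val hm ht2
  rw [e1, e2, h.ψsmul _ _ hm] at h1
  -- h1 : (1/2) * v = min v (t/2)
  rcases le_or_gt v (t / 2) with h2 | h2
  · rw [min_eq_left h2] at h1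
    have hv0 : v = 0 := by linarith
    exact absurd hv0 (fun h0 => h.kill ht hm (hv ▸ h0))
  · rw [min_eq_right h2.le] at h1
    linarith

lemma ψ_le {f : Y → ℝ} (hf : f ∈ L) {c : ℝ} (hub : ∀ y, f y ≤ c) : ψ f ≤ c := by
  rcases lt_trichotomy c 0 with hc | hc | hc
  · have hnc : (0:ℝ) < -c := by linarith
    have heq : (fun y => min ((-f) y) (-c)) = (fun _ : Y => -c) := by
      funext y
      exact min_eq_right (by have := hub y; simp only [Pi.neg_apply]; linarith)
    have h1 := h.tc_val (h.neg_mem hf) hnc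
    rw [heq, h.const_val hnc (heq ▸ h.tc_mem (h.neg_mem hf) hnc), h.ψ_neg hf] at h1
    rcases le_or_gt (-ψ f) (-c) with h2 | h2
    · rw [min_eq_left h2] at h1; linarith
    · linarith
  · subst hc
    have := h.ψ_pos (h.neg_mem hf) (fun y => by
      simp only [Pi.neg_apply]; linarith [hub y])
    rw [h.ψ_neg hf] at this; linarith
  · set w := f ⊔ 0 with hw
    have hwL : w ∈ L := h.supMem f hf 0 h.zero_mem
    have hwa : ∀ y, w y = max (f y) 0 := fun y => by
      show (f ⊔ 0) y = max (f y) 0; simp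
    have h1 : ψ f ≤ ψ w := h.mono hf hwL (fun y => by rw [hwa]; exact le_max_left _ _)
    have heq : (fun y => min (w y) c) = w := by
      funext y; rw [hwa]
      exact min_eq_left (by have := hub y; simp [max_def]; split_ifs <;> linarith)
    have h2 := h.tc_val hwL hc
    rw [heq] at h2
    rcases le_or_gt (ψ w) c with h3 | h3
    · linarith
    · rw [min_eq_right h3.le] at h2; linarith

lemma ψ_ge {f : Y → ℝ} (hf : f ∈ L) {c : ℝ} (hlb : ∀ y, c ≤ f y) : c ≤ ψ f := by
  have := h.ψ_le (h.neg_mem hf) (c := -c) (fun y => by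
    simp only [Pi.neg_apply]; linarith [hlb y])
  rw [h.ψ_neg hf] at this; linarith

lemma posPart0 {f : Y → ℝ} (hf : f ∈ L) (hle : ψ f ≤ 0) : ψ (f ⊔ 0) = 0 := by
  set w := f ⊔ 0 with hw
  have hwL : w ∈ L := h.supMem f hf 0 h.zero_mem
  have hwa : ∀ y, w y = max (f y) 0 := fun y => by
    show (f ⊔ 0) y = max (f y) 0; simp
  have ht0 : 0 ≤ ψ w := h.ψ_pos hwL (fun y => by rw [hwa]; exact le_max_right _ _)
  rcases eq_or_lt_of_le ht0 with heq | ht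
  · exact heq.symm
  · exfalso
    set t := ψ w with htdef
    have hinfL : f ⊓ 0 ∈ L := h.infMem f hf 0 h.zero_mem
    have hinfa : ∀ y, (f ⊓ 0) y = min (f y) 0 := fun y => by
      show (f ⊓ 0) y = min (f y) 0; simp
    set B := ψ (f ⊓ 0) with hB
    have key : ∀ lam : ℝ, 0 < lam → lam * ψ f = min (lam * t) 1 + lam * B := by
      intro lam hl
      have hlf : lam • f ∈ L := h.smulMem lam f hf
      have hA := h.ψtrunc _ hlf
      have hAa : ∀ y, ((lam • f) ⊓ 1) y = min (lam * f y) 1 := fun y => by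
        show min ((lam • f) y) _ = _; rfl
      have hlw : lam • w ∈ L := h.smulMem lam w hwL
      have hBv := h.ψtrunc _ hlw
      have hident : (lam • f) ⊓ 1 = ((lam • w) ⊓ 1) + lam • (f ⊓ 0) := by
        funext y
        show min (lam * f y) 1 = min (lam * w y) 1 + lam * (f ⊓ 0) y
        rw [hwa, hinfa, mul_max_of_nonneg _ _ hl.le, mul_min_of_nonneg _ _ hl.le,
          mul_zero]
        exact raux5 (lam * f y)
      have hsum := h.ψadd _ (h.truncMem _ hlw) _ (h.smulMem lam _ hinfL)
      rw [← hident, hA, h.ψsmul lam f hf, hBv, h.ψsmul lam w hwL,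
        h.ψsmul lam _ hinfL] at hsum
      have hmin : min (lam * ψ f) 1 = lam * ψ f :=
        min_eq_left (by nlinarith)
      rw [hmin] at hsum
      exact hsum
    have ht' : t ≠ 0 := ne_of_gt ht
    have h1 := key (1 / t) (by positivity)
    have h2 := key (2 / t) (by positivity)
    rw [show (1 / t) * t = 1 by field_simp, min_self] at h1
    rw [show (2 / t) * t = 2 by field_simp, show min (2:ℝ) 1 = 1 by norm_num] at h2
    have e1 : ψ f = t + B := by field_simp at h1; linarith
    have e2 : 2 * ψ f = t + 2 * B := by field_simp at h2; linarith
    linarith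

lemma posPart_val {f : Y → ℝ} (hf : f ∈ L) : ψ (f ⊔ 0) = max (ψ f) 0 := by
  rcases le_total (ψ f) 0 with hle | hge
  · rw [h.posPart0 hf hle, max_eq_right hle]
  · have hid : f ⊔ 0 = f + ((-f) ⊔ 0) := by
      funext y
      simp only [Pi.add_apply, Pi.sup_apply, Pi.zero_apply, Pi.neg_apply]
      exact raux6 (f y)
    have hm : (-f) ⊔ 0 ∈ L := h.supMem _ (h.neg_mem hf) 0 h.zero_mem
    rw [hid, h.ψadd f hf _ hm,
      h.posPart0 (h.neg_mem hf) (by rw [h.ψ_neg hf]; linarith)]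
    simp [max_eq_left hge]

lemma pos1 {f : Y → ℝ} (hf : f ∈ L) (c : ℝ) (hpos : ∀ y, 0 ≤ f y + c) :
    0 ≤ ψ f + c := by
  have := h.ψ_ge hf (c := -c) (fun y => by linarith [hpos y])
  linarith

/-- The positive part of `f + c·1` lies in the unitization, with the expected value. -/
lemma posPart1 {f : Y → ℝ} (hf : f ∈ L) (c : ℝ) :
    ∃ g ∈ L, ∃ d : ℝ, (∀ y, g y + d = max (f y + c) 0) ∧ ψ g + d = max (ψ f + c) 0 := by
  rcases lt_trichotomy c 0 with hc | hc | hc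
  · -- c < 0
    set w := f ⊔ 0 with hwdef
    have hwL : w ∈ L := h.supMem f hf 0 h.zero_mem
    have hwa : ∀ y, w y = max (f y) 0 := fun y => by
      show (f ⊔ 0) y = max (f y) 0; simp
    have hnc : (0:ℝ) < -c := by linarith
    set m : Y → ℝ := fun y => min (w y) (-c) with hmdef
    have hmL : m ∈ L := h.tc_mem hwL hnc
    refine ⟨w - m, h.sub_mem hwL hmL, 0, ?_, ?_⟩
    · intro y
      show w y - m y + 0 = max (f y + c) 0
      rw [hmdef, hwa, add_zero]
      exact raux1 (f y) c hc
    · rw [h.ψ_sub hwL hmL, h.tc_val hwL hnc, h.posPart_val hf, add_zero]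
      exact raux1 (ψ f) c hc
  · -- c = 0
    subst hc
    refine ⟨f ⊔ 0, h.supMem f hf 0 h.zero_mem, 0, ?_, ?_⟩
    · intro y
      show (f ⊔ 0) y + 0 = max (f y + 0) 0
      simp
    · rw [h.posPart_val hf, add_zero, add_zero]
  · -- c > 0
    set m : Y → ℝ := fun y => min ((-f) y) c with hmdef
    have hmL : m ∈ L := h.tc_mem (h.neg_mem hf) hc
    refine ⟨-m, h.neg_mem hmL, c, ?_, ?_⟩
    · intro y
      show -(min (-(f y)) c) + c = max (f y + c) 0
      exact raux2 (f y) c hc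
    · rw [h.ψ_neg hmL, h.tc_val (h.neg_mem hf) hc, h.ψ_neg hf]
      exact raux2 (ψ f) c hc

/-- sup of two affine elements of the unitization. -/
lemma sup1 {f : Y → ℝ} (hf : f ∈ L) {g : Y → ℝ} (hg : g ∈ L) (c d : ℝ) :
    ∃ k ∈ L, ∃ e : ℝ, (∀ y, k y + e = max (f y + c) (g y + d)) ∧
      ψ k + e = max (ψ f + c) (ψ g + d) := by
  obtain ⟨g', hg', d', hpt, hval⟩ := h.posPart1 (h.sub_mem hg hf) (d - c)
  refine ⟨f + g', h.addMem f hf g' hg', c + d', ?_, ?_⟩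
  · intro y
    have := hpt y
    show f y + g' y + (c + d') = max (f y + c) (g y + d)
    have h2 : (g - f) y = g y - f y := rfl
    rw [h2] at this
    have h3 := raux3 (f y + c) (g y + d)
    have h4 : g y + d - (f y + c) = g y - f y + (d - c) := by ring
    rw [h4] at h3
    linarith
  · rw [h.ψadd f hf g' hg']
    rw [h.ψ_sub hg hf] at hval
    have h3 := raux3 (ψ f + c) (ψ g + d)
    have h4 : ψ g + d - (ψ f + c) = ψ g - ψ f + (d - c) := by ring
    rw [h4] at h3
    linarith

/-- Detector: min(|f - ψ f|, ε) as an element of the unitization, with ψ-value 0. -/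
lemma detector {f : Y → ℝ} (hf : f ∈ L) {ε : ℝ} (hε : 0 < ε) :
    ∃ g ∈ L, ∃ d : ℝ, (∀ y, g y + d = min |f y - ψ f| ε) ∧ ψ g + d = 0 := by
  set c := ψ f with hc
  obtain ⟨h₁, hh₁, e₁, hpt₁, hval₁⟩ := h.sup1 hf (h.neg_mem hf) (-c) c
  have habs : ∀ y, h₁ y + e₁ = |f y - c| := by
    intro y
    have e1 : f y + -c = f y - c := by ring
    have e2 : (-f) y + c = -(f y - c) := by show -(f y) + c = -(f y - c); ring
    rw [hpt₁ y, e1, e2, ← abs_eq_max_neg]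
  have hval₁' : ψ h₁ + e₁ = 0 := by
    rw [hval₁, h.ψ_neg hf]; simp [hc]
  obtain ⟨h₂, hh₂, e₂, hpt₂, hval₂⟩ := h.sup1 hh₁ h.zero_mem e₁ ε
  have hpt₂' : ∀ y, h₂ y + e₂ = max |f y - c| ε := by
    intro y
    rw [hpt₂ y, habs y]
    simp
  have hval₂' : ψ h₂ + e₂ = ε := by
    rw [hval₂, h.ψ_zero, hval₁']
    simp [le_of_lt hε]
  refine ⟨h₁ - h₂, h.sub_mem hh₁ hh₂, e₁ + ε - e₂, ?_, ?_⟩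
  · intro y
    show h₁ y - h₂ y + (e₁ + ε - e₂) = min |f y - c| ε
    have := min_add_max (|f y - c|) ε
    have hb := hpt₂' y
    have ha := habs y
    linarith
  · rw [h.ψ_sub hh₁ hh₂]
    linarith

lemma fip_aux {κ : Type*} [DecidableEq κ] (s : Finset κ) (f : κ → Y → ℝ) (ε : κ → ℝ) :
    (∀ j ∈ s, f j ∈ L) → (∀ j ∈ s, 0 < ε j) →
    ∃ g ∈ L, ∃ d : ℝ, ψ g + d = 0 ∧ (∀ y, 0 ≤ g y + d) ∧
      (∀ j ∈ s, ∀ y, ε j ≤ |f j y - ψ (f j)| → (1:ℝ) ≤ g y + d) := by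
  induction s using Finset.induction_on with
  | empty =>
    intro _ _
    exact ⟨0, h.zero_mem, 0, by simp [h.ψ_zero], fun y => by simp, by simp⟩
  | @insert a s ha ih =>
    intro hf hε
    obtain ⟨g₀, hg₀, d₀, hv₀, hnn₀, hb₀⟩ :=
      ih (fun j hj => hf j (Finset.mem_insert_of_mem hj))
        (fun j hj => hε j (Finset.mem_insert_of_mem hj))
    have haL : f a ∈ L := hf a (Finset.mem_insert_self a s)
    have haε : 0 < ε a := hε a (Finset.mem_insert_self a s)
    obtain ⟨g₁, hg₁, d₁, hpt₁, hv₁⟩ := h.detector haL haε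
    refine ⟨g₀ + (ε a)⁻¹ • g₁, h.addMem _ hg₀ _ (h.smulMem _ _ hg₁),
      d₀ + (ε a)⁻¹ * d₁, ?_, ?_, ?_⟩
    · rw [h.ψadd _ hg₀ _ (h.smulMem _ _ hg₁), h.ψsmul _ _ hg₁]
      have h5 : (ε a)⁻¹ * ψ g₁ + (ε a)⁻¹ * d₁ = (ε a)⁻¹ * (ψ g₁ + d₁) := by ring
      have h6 : (ε a)⁻¹ * (ψ g₁ + d₁) = 0 := by rw [hv₁]; ring
      linarith
    · intro y
      have h1 : 0 ≤ g₀ y + d₀ := hnn₀ y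
      have h2 : 0 ≤ g₁ y + d₁ := by
        rw [hpt₁ y]; exact le_min (abs_nonneg _) haε.le
      have h3 : 0 ≤ (ε a)⁻¹ * (g₁ y + d₁) := by positivity
      show 0 ≤ g₀ y + (ε a)⁻¹ * g₁ y + (d₀ + (ε a)⁻¹ * d₁)
      nlinarith
    · intro j hj y hdev
      rcases Finset.mem_insert.mp hj with rfl | hj'
      · have h2 : g₁ y + d₁ = ε j := by
          rw [hpt₁ y]; exact min_eq_right hdev
        have h1 : 0 ≤ g₀ y + d₀ := hnn₀ y
        show (1:ℝ) ≤ g₀ y + (ε j)⁻¹ * g₁ y + (d₀ + (ε j)⁻¹ * d₁)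
        have h3 : (ε j)⁻¹ * g₁ y + (ε j)⁻¹ * d₁ = (ε j)⁻¹ * (g₁ y + d₁) := by ring
        have h4 : (ε j)⁻¹ * (g₁ y + d₁) = 1 := by
          rw [h2]; field_simp
        linarith
      · have h1 := hb₀ j hj' y hdev
        have h2 : 0 ≤ g₁ y + d₁ := by
          rw [hpt₁ y]; exact le_min (abs_nonneg _) haε.le
        have h3 : 0 ≤ (ε a)⁻¹ * (g₁ y + d₁) := by positivity
        show (1:ℝ) ≤ g₀ y + (ε a)⁻¹ * g₁ y + (d₀ + (ε a)⁻¹ * d₁)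
        nlinarith

lemma fip {κ : Type*} [Nonempty Y] (s : Finset κ) (f : κ → Y → ℝ)
    (hf : ∀ j ∈ s, f j ∈ L) (ε : κ → ℝ) (hε : ∀ j ∈ s, 0 < ε j) :
    ∃ y : Y, ∀ j ∈ s, |f j y - ψ (f j)| < ε j := by
  classical
  by_contra hcon
  push_neg at hcon
  obtain ⟨g, hg, d, hv, hnn, hb⟩ := h.fip_aux s f ε hf hε
  have key : ∀ y, 0 ≤ g y + (d - 1) := by
    intro y
    obtain ⟨j, hj, hdev⟩ := hcon y
    have := hb j hj y hdev
    linarith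
  have := h.pos1 hg (d - 1) key
  linarith

end Good
end Stmt18Aux

theorem stmt_18 {I : Type*} (X : Set (I → ℝ)) (hX : IsClosed X) [Nonempty X]
    (L : Set (↥X → ℝ))
    (hcont : ∀ f ∈ L, Continuous f)
    (hL_add : ∀ f ∈ L, ∀ g ∈ L, f + g ∈ L)
    (hL_smul : ∀ (c : ℝ), ∀ f ∈ L, c • f ∈ L)
    (hL_sup : ∀ f ∈ L, ∀ g ∈ L, f ⊔ g ∈ L)
    (hL_inf : ∀ f ∈ L, ∀ g ∈ L, f ⊓ g ∈ L)
    (hL_trunc : ∀ f ∈ L, f ⊓ 1 ∈ L)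
    (hproj : ∀ i : I, (fun p : ↥X => (p : I → ℝ) i) ∈ L) :
    ∀ ψ : (↥X → ℝ) → ℝ,
      (∀ f ∈ L, ∀ g ∈ L, ψ (f + g) = ψ f + ψ g) →
      (∀ (c : ℝ), ∀ f ∈ L, ψ (c • f) = c * ψ f) →
      (∃ f ∈ L, ψ f ≠ 0) →
      (∀ f ∈ L, ψ (f ⊓ 1) = min (ψ f) 1) →
      ∃ p : ↥X, ∀ f ∈ L, ψ f = f p := by
  intro ψ hψadd hψsmul hψne hψtr
  have good : Stmt18Aux.Good L ψ :=
    ⟨hL_add, hL_smul, hL_sup, hL_inf, hL_trunc, hψadd, hψsmul, hψtr, hψne⟩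
  classical
  set π : I → (↥X → ℝ) := fun i => fun q : ↥X => (q : I → ℝ) i with hπ
  set p : I → ℝ := fun i => ψ (π i) with hp
  have hpX : p ∈ X := by
    by_contra hpc
    obtain ⟨F, u, hu, hsub⟩ := (isOpen_pi_iff.mp hX.isOpen_compl) p hpc
    have hδ : ∀ i : I, ∃ δ : ℝ, 0 < δ ∧ (i ∈ F → Metric.ball (p i) δ ⊆ u i) := by
      intro i
      by_cases hi : i ∈ F
      · obtain ⟨δ, hδ0, hδs⟩ := Metric.isOpen_iff.mp (hu i hi).1 (p i) (hu i hi).2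
        exact ⟨δ, hδ0, fun _ => hδs⟩
      · exact ⟨1, one_pos, fun hh => absurd hh hi⟩
    choose δ hδ0 hδs using hδ
    obtain ⟨y, hy⟩ := good.fip F π (fun i _ => hproj i) δ (fun i _ => hδ0 i)
    have hmem : (y : I → ℝ) ∈ (F : Set I).pi u := by
      intro i hi
      apply hδs i hi
      rw [Metric.mem_ball, Real.dist_eq]
      exact hy i hi
    exact (hsub hmem) y.2
  refine ⟨⟨p, hpX⟩, ?_⟩
  intro f hf
  set P : ↥X := ⟨p, hpX⟩ with hP
  have key : ∀ ε : ℝ, 0 < ε → |ψ f - f P| < 2 * ε := by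
    intro ε hε
    have hOpen : IsOpen (f ⁻¹' Metric.ball (f P) ε) :=
      Metric.isOpen_ball.preimage (hcont f hf)
    obtain ⟨U, hU, hUeq⟩ := isOpen_induced_iff.mp hOpen
    have hPU : p ∈ U := by
      have hmem : P ∈ f ⁻¹' Metric.ball (f P) ε := by
        simp [Metric.mem_ball, dist_self, hε]
      rw [← hUeq] at hmem
      exact hmem
    obtain ⟨F, u, hu, hsub⟩ := (isOpen_pi_iff.mp hU) p hPU
    have hδ : ∀ i : I, ∃ δ : ℝ, 0 < δ ∧ (i ∈ F → Metric.ball (p i) δ ⊆ u i) := by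
      intro i
      by_cases hi : i ∈ F
      · obtain ⟨δ, hδ0, hδs⟩ := Metric.isOpen_iff.mp (hu i hi).1 (p i) (hu i hi).2
        exact ⟨δ, hδ0, fun _ => hδs⟩
      · exact ⟨1, one_pos, fun hh => absurd hh hi⟩
    choose δ hδ0 hδs using hδ
    obtain ⟨y, hy⟩ := good.fip (insert none (F.image some))
      (fun o => o.elim f π) (by
        intro j _
        cases j with
        | none => exact hf
        | some i => exact hproj i)
      (fun o => o.elim ε δ) (by
        intro j _
        cases j with
        | none => exact hε
        | some i => exact hδ0 i)
    have h1 : |f y - ψ f| < ε := by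
      simpa using hy none (Finset.mem_insert_self _ _)
    have h2 : (y : I → ℝ) ∈ (F : Set I).pi u := by
      intro i hi
      apply hδs i hi
      rw [Metric.mem_ball, Real.dist_eq]
      simpa using hy (some i) (Finset.mem_insert_of_mem (Finset.mem_image_of_mem some hi))
    have h3 : y ∈ f ⁻¹' Metric.ball (f P) ε := by
      rw [← hUeq]
      exact hsub h2
    have h4 : |f y - f P| < ε := by
      rw [Set.mem_preimage, Metric.mem_ball, Real.dist_eq] at h3
      exact h3
    calc |ψ f - f P| ≤ |ψ f - f y| + |f y - f P| := abs_sub_le _ _ _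
    _ < ε + ε := by rw [abs_sub_comm (ψ f) (f y)]; linarith
    _ = 2 * ε := by ring
  by_contra hne2
  have h0 : 0 < |ψ f - f P| := abs_pos.mpr (sub_ne_zero.mpr hne2)
  have := key (|ψ f - f P| / 3) (by linarith)
  linarith
end
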